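/- arXiv:cs/0611028 — 3 statements merged into one kernel-verified Lean document; each statement's English description precedes it below -/
import Mathlib

section
/- Let C ⊆ 𝔽₂ⁿ and C′ ⊆ 𝔽₂^{n′} be 3̄-summable binary linear codes. Then dim(C ⊕̄₃ C′) = dim C + dim C′ − 2. -/
open scoped BigOperators

/-- A binary linear code of length `n`: an `𝔽₂`-linear subspace of `𝔽₂ⁿ`. -/
abbrev Code (n : ℕ) : Type := Submodule (ZMod 2) (Fin n → ZMod 2)

/-- The `𝔽₂`-dimension of a code. -/
noncomputable def codeDim {n : ℕ} (C : Code n) : ℕ := Module.finrank (ZMod 2) C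

/-- The dual code `C⊥ = {x : ∀ c ∈ C, ∑ i, x i * c i = 0}`. -/
def dualCode {n : ℕ} (C : Code n) : Code n where
  carrier := {x | ∀ c ∈ C, ∑ i, x i * c i = 0}
  add_mem' := by
    intro a b ha hb c hc
    simp only [Set.mem_setOf_eq] at ha hb
    simp [Pi.add_apply, add_mul, Finset.sum_add_distrib, ha c hc, hb c hc]
  zero_mem' := by intro c hc; simp
  smul_mem' := by
    intro t x hx c hc
    simp only [Set.mem_setOf_eq] at hx
    simp [Pi.smul_apply, smul_eq_mul, mul_assoc, ← Finset.mul_sum, hx c hc]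

/-- Restriction (projection) of a code onto the coordinates in a finset `s`,
viewed as a code of length `s.card`. -/
noncomputable def restrictCode {n : ℕ} (C : Code n) (s : Finset (Fin n)) : Code s.card :=
  C.map (LinearMap.funLeft (ZMod 2) (ZMod 2) (fun j => (s.orderIsoOfFin rfl j).1))

/-- `(J, Jᶜ)` is a `k`-separation of `C`. -/
noncomputable def IsKSep {n : ℕ} (k : ℕ) (C : Code n) (J : Finset (Fin n)) : Prop :=
  k ≤ J.card ∧ k ≤ Jᶜ.card ∧
    codeDim (restrictCode C J) + codeDim (restrictCode C Jᶜ) ≤ codeDim C + (k - 1)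

/-- `(J, Jᶜ)` is an exact `k`-separation of `C`. -/
noncomputable def IsExactKSep {n : ℕ} (k : ℕ) (C : Code n) (J : Finset (Fin n)) : Prop :=
  k ≤ J.card ∧ k ≤ Jᶜ.card ∧
    codeDim (restrictCode C J) + codeDim (restrictCode C Jᶜ) = codeDim C + (k - 1)

/-- `C` is `k`-connected: it has no `k'`-separation for any `1 ≤ k' < k`. -/
noncomputable def KConnected {n : ℕ} (k : ℕ) (C : Code n) : Prop :=
  ∀ k' : ℕ, 1 ≤ k' → k' < k → ∀ J : Finset (Fin n), ¬ IsKSep k' C J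

/-- A `3`-connected code is internally `4`-connected if all its `3`-separations are minimal. -/
noncomputable def Internally4Connected {n : ℕ} (C : Code n) : Prop :=
  KConnected 3 C ∧ ∀ J : Finset (Fin n), IsKSep 3 C J → (J.card = 3 ∨ Jᶜ.card = 3)

/-- The submodule of words vanishing on all coordinates in `Y`. -/
def zeroOn {n : ℕ} (Y : Finset (Fin n)) : Code n where
  carrier := {x | ∀ i ∈ Y, x i = 0}
  add_mem' := by intro a b ha hb i hi; simp [Pi.add_apply, ha i hi, hb i hi]
  zero_mem' := by intro i _; rfl
  smul_mem' := by intro t x hx i hi; simp [Pi.smul_apply, hx i hi]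

/-- The punctured code `C/X`: project away the coordinates in `X`. -/
noncomputable def punctureCode {n : ℕ} (C : Code n) (X : Finset (Fin n)) : Code Xᶜ.card :=
  restrictCode C Xᶜ

/-- The shortened code `C∖Y`. -/
noncomputable def shortenCode {n : ℕ} (C : Code n) (Y : Finset (Fin n)) : Code Yᶜ.card :=
  restrictCode (C ⊓ zeroOn Y) Yᶜ

/-- The minor `C/X∖Y` of `C` (for disjoint `X`, `Y`). -/
noncomputable def minorCode {n : ℕ} (C : Code n) (X Y : Finset (Fin n)) :
    Code ((X ∪ Y)ᶜ.card) :=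
  restrictCode (C ⊓ zeroOn Y) (X ∪ Y)ᶜ

/-- Equivalence of codes: one is obtained from the other by a bijective relabelling
(permutation) of coordinates. -/
def CodeEquiv {m m' : ℕ} (D : Code m) (D' : Code m') : Prop :=
  ∃ e : Fin m ≃ Fin m',
    D' = D.map (LinearMap.funLeft (ZMod 2) (ZMod 2) e.symm)

/-- `D` is equivalent to a minor of `C`. -/
noncomputable def EquivToMinor {m n : ℕ} (D : Code m) (C : Code n) : Prop :=
  ∃ X Y : Finset (Fin n), Disjoint X Y ∧ CodeEquiv D (minorCode C X Y)

/-- `D` is equivalent to a proper minor of `C`. -/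
noncomputable def EquivToProperMinor {m n : ℕ} (D : Code m) (C : Code n) : Prop :=
  ∃ X Y : Finset (Fin n), Disjoint X Y ∧ (X ∪ Y).Nonempty ∧ CodeEquiv D (minorCode C X Y)

/-- The word `(0,…,0,1)`. -/
def unitLast (n : ℕ) : Fin n → ZMod 2 := fun i => if (i : ℕ) = n - 1 then 1 else 0

/-- The word `(1,0,…,0)`. -/
def unitFirst (n : ℕ) : Fin n → ZMod 2 := fun i => if (i : ℕ) = 0 then 1 else 0

/-- The word `(0,…,0,1,1,1)`. -/
def omegaLast (n : ℕ) : Fin n → ZMod 2 := fun i => if n - 3 ≤ (i : ℕ) then 1 else 0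

/-- The word `(1,1,1,0,…,0)`. -/
def omegaFirst (n : ℕ) : Fin n → ZMod 2 := fun i => if (i : ℕ) < 3 then 1 else 0

/-- Codes `C ⊆ 𝔽₂ⁿ`, `C' ⊆ 𝔽₂^n'` (with `n, n' ≥ 3`) are 2-summable. -/
def TwoSummable {n n' : ℕ} (C : Code n) (C' : Code n') : Prop :=
  3 ≤ n ∧ 3 ≤ n' ∧ unitLast n ∉ C ∧ unitLast n ∉ dualCode C ∧
    unitFirst n' ∉ C' ∧ unitFirst n' ∉ dualCode C'

/-- The 2-sum `C ⊕₂ C'`. -/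
def twoSum {n n' : ℕ} (C : Code n) (C' : Code n') (hn : 3 ≤ n) (hn' : 3 ≤ n') :
    Code (n - 1 + (n' - 1)) where
  carrier := {x | ∃ c ∈ C, ∃ c' ∈ C',
    c ⟨n - 1, by omega⟩ = c' ⟨0, by omega⟩ ∧
    ∀ i : Fin (n - 1 + (n' - 1)),
      x i = if h : (i : ℕ) < n - 1 then c ⟨(i : ℕ), by omega⟩
            else c' ⟨(i : ℕ) - (n - 1) + 1, by have := i.isLt; omega⟩}
  add_mem' := by
    rintro a b ⟨c, hc, c', hc', he, ha⟩ ⟨d, hd, d', hd', he', hb⟩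
    refine ⟨c + d, C.add_mem hc hd, c' + d', C'.add_mem hc' hd',
      by simp [Pi.add_apply, he, he'], fun i => ?_⟩
    by_cases h : (i : ℕ) < n - 1 <;> simp [Pi.add_apply, ha i, hb i, h]
  zero_mem' := by
    refine ⟨0, C.zero_mem, 0, C'.zero_mem, rfl, fun i => ?_⟩
    by_cases h : (i : ℕ) < n - 1 <;> simp [h]
  smul_mem' := by
    rintro t x ⟨c, hc, c', hc', he, hx⟩
    refine ⟨t • c, C.smul_mem t hc, t • c', C'.smul_mem t hc',
      by simp [Pi.smul_apply, he], fun i => ?_⟩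
    by_cases h : (i : ℕ) < n - 1 <;> simp [Pi.smul_apply, hx i, h]

/-- Condition (A1): no word of `C` supported on the last three coordinates has
Hamming weight 1 or 2 there. -/
def NoLowWtTail {n : ℕ} (C : Code n) : Prop :=
  ∀ c ∈ C, (∀ i : Fin n, (i : ℕ) < n - 3 → c i = 0) →
    ((∀ i : Fin n, n - 3 ≤ (i : ℕ) → c i = 0) ∨ (∀ i : Fin n, n - 3 ≤ (i : ℕ) → c i = 1))

/-- Condition (A2): no word of `C'` supported on the first three coordinates has
Hamming weight 1 or 2 there. -/
def NoLowWtHead {n : ℕ} (C : Code n) : Prop :=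
  ∀ c ∈ C, (∀ i : Fin n, 3 ≤ (i : ℕ) → c i = 0) →
    ((∀ i : Fin n, (i : ℕ) < 3 → c i = 0) ∨ (∀ i : Fin n, (i : ℕ) < 3 → c i = 1))

/-- Codes `C ⊆ 𝔽₂ⁿ`, `C' ⊆ 𝔽₂^n'` (with `n, n' ≥ 7`) are 3-summable: (A1), (A2), (A3). -/
def ThreeSummable {n n' : ℕ} (C : Code n) (C' : Code n') : Prop :=
  7 ≤ n ∧ 7 ≤ n' ∧ NoLowWtTail C ∧ NoLowWtTail (dualCode C) ∧
    NoLowWtHead C' ∧ NoLowWtHead (dualCode C') ∧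
    omegaLast n ∈ C ∧ omegaFirst n' ∈ C'

/-- The 3-sum `C ⊕₃ C'`. -/
def threeSum {n n' : ℕ} (C : Code n) (C' : Code n') (hn : 7 ≤ n) (hn' : 7 ≤ n') :
    Code (n - 3 + (n' - 3)) where
  carrier := {x | ∃ c ∈ C, ∃ c' ∈ C',
    (∀ t : Fin 3, c ⟨n - 3 + (t : ℕ), by have := t.isLt; omega⟩
        = c' ⟨(t : ℕ), by have := t.isLt; omega⟩) ∧
    ∀ i : Fin (n - 3 + (n' - 3)),
      x i = if h : (i : ℕ) < n - 3 then c ⟨(i : ℕ), by omega⟩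
            else c' ⟨(i : ℕ) - (n - 3) + 3, by have := i.isLt; omega⟩}
  add_mem' := by
    rintro a b ⟨c, hc, c', hc', he, ha⟩ ⟨d, hd, d', hd', he', hb⟩
    refine ⟨c + d, C.add_mem hc hd, c' + d', C'.add_mem hc' hd',
      fun t => by simp [Pi.add_apply, he t, he' t], fun i => ?_⟩
    by_cases h : (i : ℕ) < n - 3 <;> simp [Pi.add_apply, ha i, hb i, h]
  zero_mem' := by
    refine ⟨0, C.zero_mem, 0, C'.zero_mem, fun t => rfl, fun i => ?_⟩
    by_cases h : (i : ℕ) < n - 3 <;> simp [h]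
  smul_mem' := by
    rintro t x ⟨c, hc, c', hc', he, hx⟩
    refine ⟨t • c, C.smul_mem t hc, t • c', C'.smul_mem t hc',
      fun s => by simp [Pi.smul_apply, he s], fun i => ?_⟩
    by_cases h : (i : ℕ) < n - 3 <;> simp [Pi.smul_apply, hx i, h]

/-- Codes `C`, `C'` (with `n, n' ≥ 7`) are 3̄-summable: (A1), (A2), (A3'). -/
def ThreeBarSummable {n n' : ℕ} (C : Code n) (C' : Code n') : Prop :=
  7 ≤ n ∧ 7 ≤ n' ∧ NoLowWtTail C ∧ NoLowWtTail (dualCode C) ∧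
    NoLowWtHead C' ∧ NoLowWtHead (dualCode C') ∧
    omegaLast n ∈ dualCode C ∧ omegaFirst n' ∈ dualCode C'

/-- `C̄ = C ∪ ((0,…,0,1,1,1) + C)`, as a submodule. -/
def extendLast {n : ℕ} (C : Code n) : Code n :=
  C ⊔ Submodule.span (ZMod 2) {omegaLast n}

/-- `C̄' = C' ∪ ((1,1,1,0,…,0) + C')`, as a submodule. -/
def extendFirst {n : ℕ} (C : Code n) : Code n :=
  C ⊔ Submodule.span (ZMod 2) {omegaFirst n}

/-- The 3̄-sum `C ⊕̄₃ C' = C̄ ⊕₃ C̄'`. -/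
def threeBarSum {n n' : ℕ} (C : Code n) (C' : Code n') (hn : 7 ≤ n) (hn' : 7 ≤ n') :
    Code (n - 3 + (n' - 3)) :=
  threeSum (extendLast C) (extendFirst C') hn hn'

/-- The minimum Hamming distance (minimum weight of a nonzero codeword). -/
noncomputable def minDist {n : ℕ} (C : Code n) : ℕ :=
  sInf {w | ∃ c ∈ C, c ≠ 0 ∧ hammingNorm c = w}

/-- `C` is graphic: it has a parity-check matrix, each column of which has at most
two nonzero entries (a vertex–edge incidence matrix of a multigraph). -/
def IsGraphic {n : ℕ} (C : Code n) : Prop :=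
  ∃ (m : ℕ) (H : Matrix (Fin m) (Fin n) (ZMod 2)),
    C = LinearMap.ker (Matrix.mulVecLin H) ∧
    ∀ j : Fin n, ({i : Fin m | H i j ≠ 0} : Set (Fin m)).ncard ≤ 2

/-- `C` is regular: some parity-check matrix of `C` has a totally unimodular signing. -/
def IsRegularCode {n : ℕ} (C : Code n) : Prop :=
  ∃ (m : ℕ) (H : Matrix (Fin m) (Fin n) (ZMod 2)),
    C = LinearMap.ker (Matrix.mulVecLin H) ∧
    ∃ A : Matrix (Fin m) (Fin n) ℝ,
      (∀ i j, H i j = 0 → A i j = 0) ∧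
      (∀ i j, H i j = 1 → (A i j = 1 ∨ A i j = -1)) ∧
      A.IsTotallyUnimodular

/-- The 3×7 parity-check matrix of the `[7,4]` Hamming code: the `j`-th column is the
binary representation of `j` (for `j = 1, …, 7`). -/
def hammingMatrix : Matrix (Fin 3) (Fin 7) (ZMod 2) :=
  fun i j => if Nat.testBit ((j : ℕ) + 1) (i : ℕ) then 1 else 0

/-- The `[7,4]` Hamming code `H₇`. -/
def hammingCode : Code 7 := LinearMap.ker (Matrix.mulVecLin hammingMatrix)

/-- Generator matrix of `C(K₅)⊥`. -/
def K5perpGen : Matrix (Fin 4) (Fin 10) (ZMod 2) :=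
  !![1,0,0,0,1,1,1,0,0,0;
     0,1,0,0,1,0,0,1,1,0;
     0,0,1,0,0,1,0,1,0,1;
     0,0,0,1,0,0,1,0,1,1]

/-- The `[10,4]` code `C(K₅)⊥`. -/
def codeK5perp : Code 10 := Submodule.span (ZMod 2) (Set.range (fun i => K5perpGen i))

/-- Generator matrix of `C(K₃,₃)⊥`. -/
def K33perpGen : Matrix (Fin 5) (Fin 9) (ZMod 2) :=
  !![1,0,0,0,0,1,1,0,0;
     0,1,0,0,0,0,1,1,0;
     0,0,1,0,0,0,0,1,1;
     0,0,0,1,0,1,0,0,1;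
     0,0,0,0,1,1,1,1,1]

/-- The `[9,5]` code `C(K₃,₃)⊥`. -/
def codeK33perp : Code 9 := Submodule.span (ZMod 2) (Set.range (fun i => K33perpGen i))

/-- Parity-check matrix of `R₁₀`. -/
def R10Matrix : Matrix (Fin 5) (Fin 10) (ZMod 2) :=
  !![1,1,0,0,1,1,0,0,0,0;
     1,1,1,0,0,0,1,0,0,0;
     0,1,1,1,0,0,0,1,0,0;
     0,0,1,1,1,0,0,0,1,0;
     1,0,0,1,1,0,0,0,0,1]

/-- The `[10,5]` code `R₁₀`. -/
def codeR10 : Code 10 := LinearMap.ker (Matrix.mulVecLin R10Matrix)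

/-- The embedding `𝔽₂ⁿ ↪ ℝⁿ` identifying `𝔽₂` with `{0,1} ⊆ ℝ`. -/
def toReal {n : ℕ} (c : Fin n → ZMod 2) : Fin n → ℝ := fun i => ((c i).val : ℝ)

/-- The codeword polytope `P(C)`: the convex hull in `ℝⁿ` of a set of codewords. -/
def codewordPolytope {n : ℕ} (C : Set (Fin n → ZMod 2)) : Set (Fin n → ℝ) :=
  convexHull ℝ (toReal '' C)

/-- The fundamental polytope `Q(H) = ⋂_{h ∈ H} P(h⊥)` (with `Q(∅) = [0,1]ⁿ`). -/
def Qpoly {n : ℕ} (H : Set (Fin n → ZMod 2)) : Set (Fin n → ℝ) :=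
  {x | ∀ i, x i ∈ Set.Icc (0 : ℝ) 1} ∩
    ⋂ h ∈ H, codewordPolytope {c | ∑ i, h i * c i = 0}

/-- `C` is geometrically perfect: `P(C) = Q(C⊥)`. -/
def GeomPerfect {n : ℕ} (C : Code n) : Prop :=
  codewordPolytope (C : Set (Fin n → ZMod 2)) = Qpoly (dualCode C : Set (Fin n → ZMod 2))

/-- A family of binary linear codes (one set of codes for each length), closed under
taking codes equivalent to minors of its members. -/
noncomputable def MinorClosedFamily (F : ∀ n : ℕ, Set (Code n)) : Prop :=
  ∀ (n m : ℕ) (C : Code n) (D : Code m), C ∈ F n → EquivToMinor D C → D ∈ F m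

/-- An almost-graphic family of codes. -/
noncomputable def AlmostGraphic (F : ∀ n : ℕ, Set (Code n)) : Prop :=
  MinorClosedFamily F ∧
  ∃ D : ∀ n : ℕ, Set (Code n),
    (∀ n, D n ⊆ F n) ∧
    {p : (n : ℕ) × Code n | p.2 ∈ D p.1}.Finite ∧
    ∀ (n : ℕ) (C : Code n), C ∈ F n → KConnected 2 C →
      (IsGraphic C ∨ C ∈ D n) ∨
      (∃ (n₁ n₂ : ℕ) (hn₁ : 3 ≤ n₁) (hn₂ : 3 ≤ n₂) (C₁ : Code n₁) (C₂ : Code n₂),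
        TwoSummable C₁ C₂ ∧ EquivToMinor C₁ C ∧ EquivToMinor C₂ C ∧
        (IsGraphic C₁ ∨ C₁ ∈ D n₁) ∧ KConnected 2 C₂ ∧
        CodeEquiv C (twoSum C₁ C₂ hn₁ hn₂)) ∨
      (∃ (n₁ n₂ : ℕ) (hn₁ : 7 ≤ n₁) (hn₂ : 7 ≤ n₂) (C₁ : Code n₁) (C₂ : Code n₂),
        ThreeBarSummable C₁ C₂ ∧ EquivToMinor C₁ C ∧ EquivToMinor C₂ C ∧
        (IsGraphic C₁ ∨ C₁ ∈ D n₁) ∧ KConnected 2 C₂ ∧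
        CodeEquiv C (threeBarSum C₁ C₂ hn₁ hn₂))

namespace ThreeBarAux

open Finset

lemma sum_tail_indicator {n : ℕ} (hn : 7 ≤ n) :
    ∑ i : Fin n, (if n - 3 ≤ (i : ℕ) then (1 : ZMod 2) else 0) = 1 := by
  rw [Fin.sum_univ_eq_sum_range (fun i => if n - 3 ≤ i then (1 : ZMod 2) else 0) n,
    Finset.sum_boole]
  have h1 : (Finset.range n).filter (fun i => n - 3 ≤ i) = Finset.Ico (n - 3) n := by
    ext i; simp [Finset.mem_Ico]; omega
  rw [h1, Nat.card_Ico, show n - (n - 3) = 3 by omega]; decide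

lemma sum_head_indicator {n : ℕ} (hn : 7 ≤ n) :
    ∑ i : Fin n, (if (i : ℕ) < 3 then (1 : ZMod 2) else 0) = 1 := by
  rw [Fin.sum_univ_eq_sum_range (fun i => if i < 3 then (1 : ZMod 2) else 0) n,
    Finset.sum_boole]
  have h1 : (Finset.range n).filter (fun i => i < 3) = Finset.range 3 := by
    ext i; simp; omega
  rw [h1, Finset.card_range]; decide

lemma omegaLast_ne_zero {n : ℕ} (hn : 7 ≤ n) : omegaLast n ≠ 0 := by
  intro h0
  have := congrFun h0 ⟨n - 1, by omega⟩
  simp only [omegaLast, Pi.zero_apply] at this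
  rw [if_pos (by omega)] at this
  exact one_ne_zero this

lemma omegaFirst_ne_zero {n : ℕ} (hn : 7 ≤ n) : omegaFirst n ≠ 0 := by
  intro h0
  have := congrFun h0 ⟨0, by omega⟩
  simp only [omegaFirst, Pi.zero_apply] at this
  rw [if_pos (by omega)] at this
  exact one_ne_zero this

lemma omegaLast_not_mem {n : ℕ} (hn : 7 ≤ n) {C : Code n}
    (hd : omegaLast n ∈ dualCode C) : omegaLast n ∉ C := by
  intro hC
  have hdd : ∀ c ∈ C, ∑ i, omegaLast n i * c i = 0 := hd
  have h0 := hdd (omegaLast n) hC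
  have hterm : ∀ i : Fin n,
      omegaLast n i * omegaLast n i = (if n - 3 ≤ (i : ℕ) then (1 : ZMod 2) else 0) := by
    intro i; simp only [omegaLast]; split <;> norm_num
  rw [Finset.sum_congr rfl (fun i _ => hterm i), sum_tail_indicator hn] at h0
  exact one_ne_zero h0

lemma omegaFirst_not_mem {n : ℕ} (hn : 7 ≤ n) {C : Code n}
    (hd : omegaFirst n ∈ dualCode C) : omegaFirst n ∉ C := by
  intro hC
  have hdd : ∀ c ∈ C, ∑ i, omegaFirst n i * c i = 0 := hd
  have h0 := hdd (omegaFirst n) hC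
  have hterm : ∀ i : Fin n,
      omegaFirst n i * omegaFirst n i = (if (i : ℕ) < 3 then (1 : ZMod 2) else 0) := by
    intro i; simp only [omegaFirst]; split <;> norm_num
  rw [Finset.sum_congr rfl (fun i _ => hterm i), sum_head_indicator hn] at h0
  exact one_ne_zero h0

lemma finrank_sup_span {n : ℕ} (C : Code n) (v : Fin n → ZMod 2) (hv : v ≠ 0)
    (hvC : v ∉ C) :
    Module.finrank (ZMod 2) ↥(C ⊔ Submodule.span (ZMod 2) {v}) = codeDim C + 1 := by
  have hinf : C ⊓ Submodule.span (ZMod 2) {v} = ⊥ := by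
    rw [eq_bot_iff]
    have hall : ∀ s : ZMod 2, s = 0 ∨ s = 1 := by decide
    rintro x ⟨hxC, hxs⟩
    obtain ⟨s, rfl⟩ := Submodule.mem_span_singleton.mp hxs
    have hs : s = 0 ∨ s = 1 := hall s
    rcases hs with rfl | rfl
    · simp
    · simp at hxC; exact absurd hxC hvC
  have := Submodule.finrank_sup_add_finrank_inf_eq C (Submodule.span (ZMod 2) {v})
  rw [hinf, finrank_span_singleton hv] at this
  simpa [codeDim] using this


variable {n n' : ℕ}

/-- indices of the last three coordinates -/
def gt3 (hn : 7 ≤ n) : Fin 3 → Fin n := fun t => ⟨n - 3 + t.1, by have := t.isLt; omega⟩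

/-- indices of the first three coordinates -/
def gs3 (hn' : 7 ≤ n') : Fin 3 → Fin n' := fun t => ⟨t.1, by have := t.isLt; omega⟩

noncomputable def tau (hn : 7 ≤ n) : (Fin n → ZMod 2) →ₗ[ZMod 2] (Fin 3 → ZMod 2) :=
  LinearMap.funLeft _ _ (gt3 hn)

noncomputable def sg (hn' : 7 ≤ n') : (Fin n' → ZMod 2) →ₗ[ZMod 2] (Fin 3 → ZMod 2) :=
  LinearMap.funLeft _ _ (gs3 hn')

lemma tau_apply (hn : 7 ≤ n) (c : Fin n → ZMod 2) (t : Fin 3) :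
    tau hn c t = c (gt3 hn t) := rfl

lemma sg_apply (hn' : 7 ≤ n') (c : Fin n' → ZMod 2) (t : Fin 3) :
    sg hn' c t = c (gs3 hn' t) := rfl

noncomputable def phi (hn : 7 ≤ n) (hn' : 7 ≤ n') :
    ((Fin n → ZMod 2) × (Fin n' → ZMod 2)) →ₗ[ZMod 2] (Fin 3 → ZMod 2) :=
  (tau hn).comp (LinearMap.fst _ _ _) - (sg hn').comp (LinearMap.snd _ _ _)

lemma phi_apply (hn : 7 ≤ n) (hn' : 7 ≤ n') (p : (Fin n → ZMod 2) × (Fin n' → ZMod 2)) :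
    phi hn hn' p = tau hn p.1 - sg hn' p.2 := rfl

noncomputable def psi (hn : 7 ≤ n) (hn' : 7 ≤ n') :
    ((Fin n → ZMod 2) × (Fin n' → ZMod 2)) →ₗ[ZMod 2]
      (Fin (n - 3 + (n' - 3)) → ZMod 2) :=
  LinearMap.pi fun i =>
    if h : (i : ℕ) < n - 3 then
      (LinearMap.proj (⟨i.1, by omega⟩ : Fin n)).comp (LinearMap.fst _ _ _)
    else
      (LinearMap.proj (⟨i.1 - (n - 3) + 3, by have := i.isLt; omega⟩ : Fin n')).comp
        (LinearMap.snd _ _ _)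

lemma psi_apply (hn : 7 ≤ n) (hn' : 7 ≤ n')
    (p : (Fin n → ZMod 2) × (Fin n' → ZMod 2)) (i : Fin (n - 3 + (n' - 3))) :
    psi hn hn' p i =
      if h : (i : ℕ) < n - 3 then p.1 ⟨i.1, by omega⟩
      else p.2 ⟨i.1 - (n - 3) + 3, by have := i.isLt; omega⟩ := by
  unfold psi
  rw [LinearMap.pi_apply]
  by_cases h : (i : ℕ) < n - 3
  · rw [dif_pos h, dif_pos h]; rfl
  · rw [dif_neg h, dif_neg h]; rfl

lemma tau_omega (hn : 7 ≤ n) : tau hn (omegaLast n) = fun _ => 1 := by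
  funext t
  rw [tau_apply]
  simp only [omegaLast, gt3]
  exact if_pos (by omega)

lemma sg_omega (hn' : 7 ≤ n') : sg hn' (omegaFirst n') = fun _ => 1 := by
  funext t
  rw [sg_apply]
  simp only [omegaFirst, gs3]
  exact if_pos (by have := t.isLt; omega)

/-- The key surjectivity input: `τ(C̄) = 𝔽₂³`. -/
lemma map_tau_extendLast_eq_top (hn : 7 ≤ n) {C : Code n}
    (hA1d : NoLowWtTail (dualCode C)) (hωd : omegaLast n ∈ dualCode C) :
    Submodule.map (tau hn) (extendLast C) = ⊤ := by
  set U := Submodule.map (tau hn) (extendLast C) with hU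
  have hωCb : omegaLast n ∈ extendLast C :=
    Submodule.mem_sup_right (Submodule.mem_span_singleton_self _)
  have hωU : tau hn (omegaLast n) ∈ U := Submodule.mem_map_of_mem hωCb
  -- key: only 0 is orthogonal to U
  have key : ∀ w : Fin 3 → ZMod 2, (∀ u ∈ U, ∑ t, w t * u t = 0) → w = 0 := by
    intro w hw
    set wh : Fin n → ZMod 2 :=
      fun i => if hi : n - 3 ≤ (i : ℕ) then w ⟨i.1 - (n - 3), by have := i.isLt; omega⟩
               else 0 with hwh
    have hwd : wh ∈ dualCode C := by
      intro c hc
      have hτ : tau hn c ∈ U := Submodule.mem_map_of_mem (Submodule.mem_sup_left hc)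
      have h0 := hw _ hτ
      rw [← h0]
      calc ∑ i : Fin n, wh i * c i
          = ∑ i ∈ Finset.univ.filter (fun i : Fin n => n - 3 ≤ (i : ℕ)), wh i * c i := by
            refine (Finset.sum_filter_of_ne ?_).symm
            intro x _ hx
            by_contra hcon
            exact hx (by rw [hwh]; simp only [dif_neg hcon, zero_mul])
        _ = ∑ t : Fin 3, w t * tau hn c t := by
            refine Finset.sum_nbij'
              (fun i : Fin n => (⟨i.1 - (n - 3), by have := i.isLt; omega⟩ : Fin 3))
              (gt3 hn) (fun a _ => Finset.mem_univ _) ?_ ?_ ?_ ?_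
            · intro t _
              simp only [Finset.mem_filter, Finset.mem_univ, true_and, gt3]
              omega
            · intro a ha
              simp only [Finset.mem_filter, Finset.mem_univ, true_and] at ha
              apply Fin.ext
              simp only [gt3]
              omega
            · intro t _
              apply Fin.ext
              simp only [gt3]
              omega
            · intro a ha
              simp only [Finset.mem_filter, Finset.mem_univ, true_and] at ha
              have h1 : wh a = w ⟨a.1 - (n - 3), by have := a.isLt; omega⟩ := by
                rw [hwh]; simp only [dif_pos ha]
              have h2 : tau hn c ⟨a.1 - (n - 3), by have := a.isLt; omega⟩ = c a := by
                rw [tau_apply]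
                congr 1
                apply Fin.ext
                simp only [gt3]
                omega
              rw [h1, h2]
    have hvan : ∀ i : Fin n, (i : ℕ) < n - 3 → wh i = 0 := by
      intro i hi; rw [hwh]; exact dif_neg (by omega)
    rcases hA1d wh hwd hvan with h0 | h1
    · funext t
      have ht := h0 (gt3 hn t) (by simp only [gt3]; omega)
      rw [hwh] at ht
      simp only [gt3] at ht
      simp only [show n - 3 ≤ n - 3 + (t : ℕ) from by omega, ↓reduceDIte] at ht
      have he : (⟨n - 3 + t.1 - (n - 3), by omega⟩ : Fin 3) = t := by
        apply Fin.ext; simp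
      rw [he] at ht
      exact ht
    · exfalso
      have hw1 : ∀ t : Fin 3, w t = 1 := by
        intro t
        have ht := h1 (gt3 hn t) (by simp only [gt3]; omega)
        rw [hwh] at ht
        simp only [gt3] at ht
        simp only [show n - 3 ≤ n - 3 + (t : ℕ) from by omega, ↓reduceDIte] at ht
        have he : (⟨n - 3 + t.1 - (n - 3), by omega⟩ : Fin 3) = t := by
          apply Fin.ext; simp
        rw [he] at ht
        exact ht
      have hsum := hw _ hωU
      rw [tau_omega hn] at hsum
      rw [Fin.sum_univ_three] at hsum
      rw [hw1, hw1, hw1] at hsum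
      exact absurd hsum (by decide)
  -- build an injection into the dual of U
  let Φ : (Fin 3 → ZMod 2) →ₗ[ZMod 2] Module.Dual (ZMod 2) ↥U :=
    { toFun := fun w =>
        { toFun := fun u => ∑ t, w t * (u : Fin 3 → ZMod 2) t
          map_add' := fun u v => by
            simp [mul_add, Finset.sum_add_distrib]
          map_smul' := fun s u => by
            simp [Finset.mul_sum, mul_left_comm] }
      map_add' := fun w w' => by
        ext u
        simp [add_mul, Finset.sum_add_distrib]
      map_smul' := fun s w => by
        ext u
        simp [Finset.mul_sum, mul_assoc] }
  have hΦinj : Function.Injective Φ := by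
    rw [injective_iff_map_eq_zero]
    intro w hw0
    refine key w (fun u hu => ?_)
    exact congrFun (congrArg (fun f => f.toFun) hw0) ⟨u, hu⟩
  have h3 : Module.finrank (ZMod 2) (Fin 3 → ZMod 2)
      ≤ Module.finrank (ZMod 2) (Module.Dual (ZMod 2) ↥U) :=
    LinearMap.finrank_le_finrank_of_injective hΦinj
  rw [Subspace.dual_finrank_eq, Module.finrank_fin_fun] at h3
  refine Submodule.eq_top_of_finrank_eq ?_
  rw [Module.finrank_fin_fun]
  exact le_antisymm (by simpa [Module.finrank_fin_fun] using Submodule.finrank_le U) h3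


lemma omegaLast_mem_extendLast {C : Code n} : omegaLast n ∈ extendLast C :=
  Submodule.mem_sup_right (Submodule.mem_span_singleton_self _)

lemma omegaFirst_mem_extendFirst {C : Code n'} : omegaFirst n' ∈ extendFirst C :=
  Submodule.mem_sup_right (Submodule.mem_span_singleton_self _)

section Generic

variable {K V W : Type*} [DivisionRing K] [AddCommGroup V] [Module K V]
  [AddCommGroup W] [Module K W]

lemma finrank_map_add_finrank_inf_ker [FiniteDimensional K V]
    (S : Submodule K V) (ψ : V →ₗ[K] W) :
    Module.finrank K ↥(Submodule.map ψ S) + Module.finrank K ↥(S ⊓ LinearMap.ker ψ)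
      = Module.finrank K ↥S := by
  have h := LinearMap.finrank_range_add_finrank_ker (ψ.comp S.subtype)
  rw [LinearMap.range_comp, Submodule.range_subtype, LinearMap.ker_comp,
    ← Submodule.finrank_map_subtype_eq S, Submodule.map_comap_subtype] at h
  exact h

lemma finrank_prod_submodule [FiniteDimensional K V] [FiniteDimensional K W]
    (p : Submodule K V) (q : Submodule K W) :
    Module.finrank K ↥(p.prod q) = Module.finrank K ↥p + Module.finrank K ↥q := by
  have hrange : LinearMap.range (LinearMap.prodMap p.subtype q.subtype) = p.prod q := by
    ext x
    constructor
    · rintro ⟨⟨a, b⟩, rfl⟩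
      exact ⟨a.2, b.2⟩
    · rintro ⟨h1, h2⟩
      exact ⟨(⟨x.1, h1⟩, ⟨x.2, h2⟩), rfl⟩
  have h := LinearMap.finrank_range_add_finrank_ker (LinearMap.prodMap p.subtype q.subtype)
  rw [hrange, LinearMap.ker_prodMap, Submodule.ker_subtype, Submodule.ker_subtype,
    Submodule.prod_bot, finrank_bot, add_zero, Module.finrank_prod] at h
  exact h

end Generic

/-- The kernel of the gluing construction. -/
lemma inf_ker_eq_span (hn : 7 ≤ n) (hn' : 7 ≤ n') {C : Code n} {C' : Code n'}
    (hA1 : NoLowWtTail C) (hA2 : NoLowWtHead C')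
    (hωC : omegaLast n ∉ C) (hω'C' : omegaFirst n' ∉ C') :
    ((extendLast C).prod (extendFirst C') ⊓ LinearMap.ker (phi hn hn')) ⊓
      LinearMap.ker (psi hn hn') =
    Submodule.span (ZMod 2) {(omegaLast n, omegaFirst n')} := by
  apply le_antisymm
  · intro x hx
    rw [Submodule.mem_inf, Submodule.mem_inf] at hx
    obtain ⟨⟨hmem, hf⟩, hg⟩ := hx
    obtain ⟨a, b⟩ := x
    obtain ⟨haC, hbC⟩ := hmem
    rw [LinearMap.mem_ker] at hf hg
    have hf' : phi hn hn' (a, b) = 0 := hf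
    have hg' : psi hn hn' (a, b) = 0 := hg
    -- a vanishes on the first n-3 coordinates
    have ha0 : ∀ j : Fin n, (j : ℕ) < n - 3 → a j = 0 := by
      intro j hj
      have hc := congrFun hg' ⟨j.1, by omega⟩
      rw [psi_apply] at hc
      simp only [Pi.zero_apply] at hc
      rw [dif_pos (show ((⟨j.1, by omega⟩ : Fin (n - 3 + (n' - 3))) : ℕ) < n - 3 from hj)] at hc
      simpa [Fin.eta] using hc
    -- b vanishes on coordinates ≥ 3
    have hb0 : ∀ j : Fin n', 3 ≤ (j : ℕ) → b j = 0 := by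
      intro j hj
      have hlt : n - 3 + (j.1 - 3) < n - 3 + (n' - 3) := by have := j.isLt; omega
      have hc := congrFun hg' ⟨n - 3 + (j.1 - 3), hlt⟩
      rw [psi_apply] at hc
      simp only [Pi.zero_apply] at hc
      rw [dif_neg (show ¬ ((⟨n - 3 + (j.1 - 3), hlt⟩ : Fin (n - 3 + (n' - 3))) : ℕ) < n - 3
        by simp)] at hc
      have he : (⟨((⟨n - 3 + (j.1 - 3), hlt⟩ : Fin (n - 3 + (n' - 3))) : ℕ) - (n - 3) + 3,
          by have := j.isLt; simp; omega⟩ : Fin n') = j := by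
        apply Fin.ext; simp; omega
      rw [he] at hc
      exact hc
    -- decompose a
    obtain ⟨y, hyC, z, hz, hyz⟩ := Submodule.mem_sup.mp haC
    obtain ⟨s, rfl⟩ := Submodule.mem_span_singleton.mp hz
    have hy0 : ∀ i : Fin n, (i : ℕ) < n - 3 → y i = 0 := by
      intro i hi
      have h1 : y i + s * omegaLast n i = a i := congrFun hyz i
      rw [show omegaLast n i = 0 from if_neg (by omega)] at h1
      rw [ha0 i hi] at h1
      simpa using h1
    have ha : a = s • omegaLast n := by
      rcases hA1 y hyC hy0 with hall0 | hall1
      · have hy : y = 0 := by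
          funext i
          by_cases hi : (i : ℕ) < n - 3
          · exact hy0 i hi
          · exact hall0 i (by omega)
        have hyz2 : y + s • omegaLast n = a := hyz
        rw [← hyz2, hy, zero_add]
      · exfalso
        have hy : y = omegaLast n := by
          funext i
          by_cases hi : n - 3 ≤ (i : ℕ)
          · rw [hall1 i hi]; exact (if_pos hi).symm
          · rw [hy0 i (by omega)]; exact (if_neg hi).symm
        exact hωC (hy ▸ hyC)
    -- decompose b
    obtain ⟨y', hy'C, z', hz', hyz'⟩ := Submodule.mem_sup.mp hbC
    obtain ⟨s', rfl⟩ := Submodule.mem_span_singleton.mp hz'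
    have hy'0 : ∀ i : Fin n', 3 ≤ (i : ℕ) → y' i = 0 := by
      intro i hi
      have h1 : y' i + s' * omegaFirst n' i = b i := congrFun hyz' i
      rw [show omegaFirst n' i = 0 from if_neg (by omega)] at h1
      rw [hb0 i hi] at h1
      simpa using h1
    have hb : b = s' • omegaFirst n' := by
      rcases hA2 y' hy'C hy'0 with hall0 | hall1
      · have hy : y' = 0 := by
          funext i
          by_cases hi : 3 ≤ (i : ℕ)
          · exact hy'0 i hi
          · exact hall0 i (by omega)
        have hyz2 : y' + s' • omegaFirst n' = b := hyz'
        rw [← hyz2, hy, zero_add]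
      · exfalso
        have hy : y' = omegaFirst n' := by
          funext i
          by_cases hi : (i : ℕ) < 3
          · rw [hall1 i hi]; exact (if_pos hi).symm
          · rw [hy'0 i (by omega)]; exact (if_neg hi).symm
        exact hω'C' (hy ▸ hy'C)
    -- the gluing scalars agree
    have hst : s = s' := by
      have h1 := congrFun hf' (0 : Fin 3)
      simp only [phi_apply, Pi.sub_apply, Pi.zero_apply] at h1
      have h1' := sub_eq_zero.mp h1
      rw [tau_apply, sg_apply, ha, hb] at h1'
      simp only [Pi.smul_apply, smul_eq_mul, omegaLast, omegaFirst, gt3, gs3] at h1'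
      rw [if_pos (show n - 3 ≤ n - 3 + ((0 : Fin 3) : ℕ) by omega),
        if_pos (show ((0 : Fin 3) : ℕ) < 3 by norm_num)] at h1'
      simpa using h1'
    refine Submodule.mem_span_singleton.mpr ⟨s, ?_⟩
    refine Prod.ext ?_ ?_
    · simpa using ha.symm
    · rw [hst]; simpa using hb.symm
  · rw [Submodule.span_le, Set.singleton_subset_iff, SetLike.mem_coe,
      Submodule.mem_inf, Submodule.mem_inf]
    refine ⟨⟨⟨omegaLast_mem_extendLast, omegaFirst_mem_extendFirst⟩, ?_⟩, ?_⟩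
    · rw [LinearMap.mem_ker]
      show tau hn (omegaLast n) - sg hn' (omegaFirst n') = 0
      rw [tau_omega, sg_omega, sub_self]
    · rw [LinearMap.mem_ker]
      funext i
      rw [psi_apply]
      simp only [Pi.zero_apply]
      by_cases hi : (i : ℕ) < n - 3
      · rw [dif_pos hi]
        exact if_neg (by simp; omega)
      · rw [dif_neg hi]
        exact if_neg (by simp)

end ThreeBarAux

set_option synthInstance.maxHeartbeats 1000000 in
set_option maxHeartbeats 1600000 in
/-- dimension of a 3̄-sum. -/
theorem threeBarSum_dim {n n' : ℕ} (C : Code n) (C' : Code n')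
    (h : ThreeBarSummable C C') :
    codeDim (threeBarSum C C' h.1 h.2.1) + 2 = codeDim C + codeDim C' := by
  classical
  obtain ⟨hn, hn', hA1, hA1d, hA2, hA2d, hωd, hω'd⟩ := id h
  have hωC : omegaLast n ∉ C := ThreeBarAux.omegaLast_not_mem hn hωd
  have hω'C' : omegaFirst n' ∉ C' := ThreeBarAux.omegaFirst_not_mem hn' hω'd
  -- dimensions of the extended codes
  have hrCb : Module.finrank (ZMod 2) ↥(extendLast C) = codeDim C + 1 := by
    unfold extendLast
    exact ThreeBarAux.finrank_sup_span C _ (ThreeBarAux.omegaLast_ne_zero hn) hωC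
  have hrCb' : Module.finrank (ZMod 2) ↥(extendFirst C') = codeDim C' + 1 := by
    unfold extendFirst
    exact ThreeBarAux.finrank_sup_span C' _ (ThreeBarAux.omegaFirst_ne_zero hn') hω'C'
  -- the flat submodule of matched pairs
  set S := (extendLast C).prod (extendFirst C') ⊓ LinearMap.ker (ThreeBarAux.phi hn hn')
    with hS_def
  -- the image of phi on the product is everything
  have htop : Submodule.map (ThreeBarAux.phi hn hn')
      ((extendLast C).prod (extendFirst C')) = ⊤ := by
    have hUtop := ThreeBarAux.map_tau_extendLast_eq_top hn hA1d hωd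
    rw [eq_top_iff]
    intro v _
    have hv : v ∈ Submodule.map (ThreeBarAux.tau hn) (extendLast C) := by
      rw [hUtop]; trivial
    obtain ⟨c, hc, hcv⟩ := hv
    refine ⟨(c, 0), ⟨hc, Submodule.zero_mem _⟩, ?_⟩
    rw [ThreeBarAux.phi_apply]
    simp [hcv]
  -- dimension of S
  have e1 := ThreeBarAux.finrank_map_add_finrank_inf_ker
    ((extendLast C).prod (extendFirst C')) (ThreeBarAux.phi hn hn')
  rw [htop, finrank_top, Module.finrank_fin_fun,
    ThreeBarAux.finrank_prod_submodule, hrCb, hrCb'] at e1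
  rw [← hS_def] at e1
  -- the 3-bar-sum is the image of S under psi
  have hset : threeBarSum C C' h.1 h.2.1 = Submodule.map (ThreeBarAux.psi hn hn') S := by
    ext x
    constructor
    · intro hx
      obtain ⟨c, hc, c', hc', hglue, hcoord⟩ := hx
      have hker : ((c, c') : (Fin n → ZMod 2) × (Fin n' → ZMod 2))
          ∈ LinearMap.ker (ThreeBarAux.phi hn hn') := by
        rw [LinearMap.mem_ker]
        show ThreeBarAux.tau hn c - ThreeBarAux.sg hn' c' = 0
        rw [sub_eq_zero]
        funext t
        exact hglue t
      refine ⟨(c, c'), ⟨⟨hc, hc'⟩, hker⟩, ?_⟩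
      funext i
      rw [ThreeBarAux.psi_apply, hcoord i]
    · rintro ⟨⟨a, b⟩, ⟨⟨haC, hbC⟩, hker⟩, rfl⟩
      refine ⟨a, haC, b, hbC, ?_, ?_⟩
      · intro t
        have h1 : ThreeBarAux.phi hn hn' (a, b) = 0 := LinearMap.mem_ker.mp hker
        have h2 := congrFun h1 t
        simp only [ThreeBarAux.phi_apply, Pi.sub_apply, Pi.zero_apply] at h2
        exact sub_eq_zero.mp h2
      · intro i
        exact ThreeBarAux.psi_apply hn hn' (a, b) i
  -- rank-nullity for psi on S
  have e2 := ThreeBarAux.finrank_map_add_finrank_inf_ker S (ThreeBarAux.psi hn hn')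
  have hker1 : Module.finrank (ZMod 2) ↥(S ⊓ LinearMap.ker (ThreeBarAux.psi hn hn')) = 1 := by
    rw [hS_def, ThreeBarAux.inf_ker_eq_span hn hn' hA1 hA2 hωC hω'C']
    refine finrank_span_singleton ?_
    intro h0
    exact ThreeBarAux.omegaLast_ne_zero hn (congrArg Prod.fst h0)
  rw [hker1] at e2
  have hdim : codeDim (threeBarSum C C' h.1 h.2.1)
      = Module.finrank (ZMod 2) ↥(Submodule.map (ThreeBarAux.psi hn hn') S) := by
    unfold codeDim
    rw [hset]
  rw [hdim]
  omega
end

section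
/- Let C ⊆ 𝔽₂ⁿ and C′ ⊆ 𝔽₂^{n′} be 3-summable binary linear codes. Then the dual codes C⊥ and C′⊥ are 3̄-summable, and (C ⊕₃ C′)⊥ = C⊥ ⊕̄₃ C′⊥. -/
open scoped BigOperators

section Aux

private lemma zmod2_add_self (a : ZMod 2) : a + a = 0 := by revert a; decide

private lemma zmod2_cases (a : ZMod 2) : a = 0 ∨ a = 1 := by revert a; decide

private lemma zmod2_eq_of_add (a b : ZMod 2) (h : a + b = 0) : a = b := by
  revert h; revert b; revert a; decide

private lemma mem_dualCode {n : ℕ} (C : Code n) (x : Fin n → ZMod 2) :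
    x ∈ dualCode C ↔ ∀ c ∈ C, ∑ i, x i * c i = 0 := Iff.rfl

private noncomputable def dotForm (n : ℕ) : LinearMap.BilinForm (ZMod 2) (Fin n → ZMod 2) :=
  LinearMap.mk₂ (ZMod 2) (fun a b => ∑ i, a i * b i)
    (fun a a' b => by simp [add_mul, Finset.sum_add_distrib])
    (fun t a b => by simp [Finset.mul_sum, mul_assoc])
    (fun a b b' => by simp [mul_add, Finset.sum_add_distrib])
    (fun t a b => by simp [Finset.mul_sum, mul_assoc, mul_left_comm])

private lemma dotForm_apply {n : ℕ} (a b : Fin n → ZMod 2) :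
    dotForm n a b = ∑ i, a i * b i := rfl

private lemma dotForm_comm {n : ℕ} (a b : Fin n → ZMod 2) :
    dotForm n a b = dotForm n b a := by
  rw [dotForm_apply, dotForm_apply]
  exact Finset.sum_congr rfl fun i _ => mul_comm _ _

private lemma dualCode_eq_orthogonal {n : ℕ} (C : Code n) :
    dualCode C = (dotForm n).orthogonal C := by
  ext x
  simp only [mem_dualCode, LinearMap.BilinForm.mem_orthogonal_iff,
    LinearMap.BilinForm.isOrtho_def]
  constructor
  · intro h c hc; rw [dotForm_comm, dotForm_apply]; exact h c hc
  · intro h c hc; have := h c hc; rwa [dotForm_comm, dotForm_apply] at this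

theorem dualCode_dualCode {n : ℕ} (C : Code n) : dualCode (dualCode C) = C := by
  rw [dualCode_eq_orthogonal, dualCode_eq_orthogonal]
  refine LinearMap.BilinForm.orthogonal_orthogonal ?_ ?_ C
  · refine (LinearMap.IsRefl.nondegenerate_iff_separatingLeft fun x y hxy => by
      rwa [dotForm_comm]).mpr ?_
    intro x hx
    funext i
    have := hx (Pi.single i 1)
    rw [dotForm_apply] at this
    simpa [Pi.single_apply, mul_ite, Finset.sum_ite_eq'] using this
  · intro x y hxy
    rwa [dotForm_comm]

private lemma dualCode_bot {n : ℕ} : dualCode (⊥ : Code n) = ⊤ := by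
  ext x
  simp only [mem_dualCode, Submodule.mem_bot, Submodule.mem_top, iff_true]
  rintro c rfl
  simp

end Aux

section Aux2

private lemma sum_split_tail {n : ℕ} (hn : 3 ≤ n) (f : Fin n → ZMod 2) :
    ∑ i, f i = (∑ i : Fin (n - 3), f ⟨(i : ℕ), by have := i.isLt; omega⟩) +
      ∑ t : Fin 3, f ⟨n - 3 + (t : ℕ), by have := t.isLt; omega⟩ := by
  have h : n - 3 + 3 = n := by omega
  rw [← (finCongr h).sum_comp f, Fin.sum_univ_add]
  exact congrArg₂ (· + ·)
    (Finset.sum_congr rfl fun i _ => congrArg f (Fin.ext (by simp)))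
    (Finset.sum_congr rfl fun t _ => congrArg f (Fin.ext (by simp)))

private lemma sum_split_head {n : ℕ} (hn : 3 ≤ n) (f : Fin n → ZMod 2) :
    ∑ i, f i = (∑ t : Fin 3, f ⟨(t : ℕ), by have := t.isLt; omega⟩) +
      ∑ j : Fin (n - 3), f ⟨3 + (j : ℕ), by have := j.isLt; omega⟩ := by
  have h : 3 + (n - 3) = n := by omega
  rw [← (finCongr h).sum_comp f, Fin.sum_univ_add]
  exact congrArg₂ (· + ·)
    (Finset.sum_congr rfl fun t _ => congrArg f (Fin.ext (by simp)))
    (Finset.sum_congr rfl fun j _ => congrArg f (Fin.ext (by simp)))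

/-- The projection of `C` onto the last three coordinates is surjective. -/
private lemma midSurj {n : ℕ} (hn : 7 ≤ n) (C : Code n)
    (hd : NoLowWtTail (dualCode C)) (hω : omegaLast n ∈ C) (m : Fin 3 → ZMod 2) :
    ∃ c ∈ C, ∀ t : Fin 3, c ⟨n - 3 + (t : ℕ), by have := t.isLt; omega⟩ = m t := by
  classical
  set L : (Fin n → ZMod 2) →ₗ[ZMod 2] (Fin 3 → ZMod 2) :=
    LinearMap.funLeft (ZMod 2) (ZMod 2)
      (fun t : Fin 3 => (⟨n - 3 + (t : ℕ), by have := t.isLt; omega⟩ : Fin n)) with hL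
  have hLapp : ∀ (c : Fin n → ZMod 2) (t : Fin 3),
      L c t = c ⟨n - 3 + (t : ℕ), by have := t.isLt; omega⟩ := fun c t => rfl
  set P : Code 3 := C.map L with hPdef
  suffices hP : P = ⊤ by
    have hm : m ∈ P := by rw [hP]; trivial
    obtain ⟨c, hc, hLc⟩ := hm
    exact ⟨c, hc, fun t => by rw [← hLc]; rfl⟩
  by_contra hP
  have hne : dualCode P ≠ ⊥ := fun hbot => hP (by
    have h2 := congrArg dualCode hbot
    rwa [dualCode_dualCode, dualCode_bot] at h2)
  obtain ⟨y, hy, hy0⟩ := Submodule.exists_mem_ne_zero_of_ne_bot hne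
  have hyP : ∀ p ∈ P, ∑ t, y t * p t = 0 := (mem_dualCode P y).mp hy
  set e : Fin n → ZMod 2 :=
    fun i => if h : n - 3 ≤ (i : ℕ) then y ⟨(i : ℕ) - (n - 3), by have := i.isLt; omega⟩
             else 0 with he
  have h2 : ∀ t : Fin 3, e ⟨n - 3 + (t : ℕ), by have := t.isLt; omega⟩ = y t := by
    intro t
    simp only [he]
    rw [dif_pos (Nat.le_add_right _ _)]
    exact congrArg y (Fin.ext (by simp))
  have hvan : ∀ i : Fin n, (i : ℕ) < n - 3 → e i = 0 := by
    intro i hi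
    simp only [he]
    exact dif_neg (by omega)
  have heC : e ∈ dualCode C := by
    refine (mem_dualCode C e).mpr fun c hc => ?_
    rw [sum_split_tail (by omega) (fun i => e i * c i)]
    rw [Finset.sum_eq_zero (fun (i : Fin (n - 3)) _ => by
      rw [hvan _ (by simpa using i.isLt), zero_mul]), zero_add]
    calc (∑ t : Fin 3, e ⟨n - 3 + (t : ℕ), by have := t.isLt; omega⟩ *
            c ⟨n - 3 + (t : ℕ), by have := t.isLt; omega⟩)
        = ∑ t, y t * L c t := Finset.sum_congr rfl fun t _ => by rw [h2 t, hLapp]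
      _ = 0 := hyP (L c) ⟨c, hc, rfl⟩
  rcases hd e heC hvan with h0 | h1
  · apply hy0
    funext t
    rw [Pi.zero_apply, ← h2 t]
    exact h0 _ (Nat.le_add_right _ _)
  · have hy1 : ∀ t, y t = 1 := fun t => by
      rw [← h2 t]; exact h1 _ (Nat.le_add_right _ _)
    have hωs := hyP (L (omegaLast n)) ⟨_, hω, rfl⟩
    rw [Fin.sum_univ_three, hy1, hy1, hy1, hLapp, hLapp, hLapp] at hωs
    simp only [omegaLast, one_mul] at hωs
    rw [if_pos (by omega), if_pos (by omega), if_pos (by omega)] at hωs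
    exact absurd hωs (by decide)

/-- The projection of `C'` onto the first three coordinates is surjective. -/
private lemma headSurj {n : ℕ} (hn : 7 ≤ n) (C : Code n)
    (hd : NoLowWtHead (dualCode C)) (hω : omegaFirst n ∈ C) (m : Fin 3 → ZMod 2) :
    ∃ c ∈ C, ∀ t : Fin 3, c ⟨(t : ℕ), by have := t.isLt; omega⟩ = m t := by
  classical
  set L : (Fin n → ZMod 2) →ₗ[ZMod 2] (Fin 3 → ZMod 2) :=
    LinearMap.funLeft (ZMod 2) (ZMod 2)
      (fun t : Fin 3 => (⟨(t : ℕ), by have := t.isLt; omega⟩ : Fin n)) with hL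
  have hLapp : ∀ (c : Fin n → ZMod 2) (t : Fin 3),
      L c t = c ⟨(t : ℕ), by have := t.isLt; omega⟩ := fun c t => rfl
  set P : Code 3 := C.map L with hPdef
  suffices hP : P = ⊤ by
    have hm : m ∈ P := by rw [hP]; trivial
    obtain ⟨c, hc, hLc⟩ := hm
    exact ⟨c, hc, fun t => by rw [← hLc]; rfl⟩
  by_contra hP
  have hne : dualCode P ≠ ⊥ := fun hbot => hP (by
    have h2 := congrArg dualCode hbot
    rwa [dualCode_dualCode, dualCode_bot] at h2)
  obtain ⟨y, hy, hy0⟩ := Submodule.exists_mem_ne_zero_of_ne_bot hne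
  have hyP : ∀ p ∈ P, ∑ t, y t * p t = 0 := (mem_dualCode P y).mp hy
  set e : Fin n → ZMod 2 :=
    fun i => if h : (i : ℕ) < 3 then y ⟨(i : ℕ), h⟩ else 0 with he
  have h2 : ∀ t : Fin 3, e ⟨(t : ℕ), by have := t.isLt; omega⟩ = y t := by
    intro t
    simp only [he]
    rw [dif_pos t.isLt]
  have hvan : ∀ i : Fin n, 3 ≤ (i : ℕ) → e i = 0 := by
    intro i hi
    simp only [he]
    exact dif_neg (by omega)
  have heC : e ∈ dualCode C := by
    refine (mem_dualCode C e).mpr fun c hc => ?_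
    rw [sum_split_head (by omega) (fun i => e i * c i)]
    have hz : (∑ j : Fin (n - 3),
        e ⟨3 + (j : ℕ), by have := j.isLt; omega⟩ *
          c ⟨3 + (j : ℕ), by have := j.isLt; omega⟩) = 0 :=
      Finset.sum_eq_zero fun j _ => by
        rw [hvan _ (Nat.le_add_right _ _), zero_mul]
    rw [hz, add_zero]
    calc (∑ t : Fin 3, e ⟨(t : ℕ), by have := t.isLt; omega⟩ *
            c ⟨(t : ℕ), by have := t.isLt; omega⟩)
        = ∑ t, y t * L c t := Finset.sum_congr rfl fun t _ => by rw [h2 t, hLapp]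
      _ = 0 := hyP (L c) ⟨c, hc, rfl⟩
  rcases hd e heC hvan with h0 | h1
  · apply hy0
    funext t
    rw [Pi.zero_apply, ← h2 t]
    exact h0 _ t.isLt
  · have hy1 : ∀ t, y t = 1 := fun t => by
      rw [← h2 t]; exact h1 _ t.isLt
    have hωs := hyP (L (omegaFirst n)) ⟨_, hω, rfl⟩
    rw [Fin.sum_univ_three, hy1, hy1, hy1, hLapp, hLapp, hLapp] at hωs
    simp only [omegaFirst, one_mul] at hωs
    rw [if_pos (by omega), if_pos (by omega), if_pos (by omega)] at hωs
    exact absurd hωs (by decide)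

end Aux2

section Aux3

/-- The head part of the pairing, as a linear functional in `c`. -/
private def SaL {n n' : ℕ} (x : Fin (n - 3 + (n' - 3)) → ZMod 2) :
    (Fin n → ZMod 2) →ₗ[ZMod 2] ZMod 2 where
  toFun c := ∑ i : Fin (n - 3),
    x (Fin.castAdd (n' - 3) i) * c ⟨(i : ℕ), by have := i.isLt; omega⟩
  map_add' a b := by
    simp only [Pi.add_apply, mul_add]
    rw [Finset.sum_add_distrib]
  map_smul' t a := by
    simp only [Pi.smul_apply, smul_eq_mul, RingHom.id_apply]
    rw [Finset.mul_sum]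
    exact Finset.sum_congr rfl fun i _ => mul_left_comm _ _ _

/-- The tail part of the pairing, as a linear functional in `c'`. -/
private def SbL {n n' : ℕ} (x : Fin (n - 3 + (n' - 3)) → ZMod 2) :
    (Fin n' → ZMod 2) →ₗ[ZMod 2] ZMod 2 where
  toFun c' := ∑ j : Fin (n' - 3),
    x (Fin.natAdd (n - 3) j) * c' ⟨(j : ℕ) + 3, by have := j.isLt; omega⟩
  map_add' a b := by
    simp only [Pi.add_apply, mul_add]
    rw [Finset.sum_add_distrib]
  map_smul' t a := by
    simp only [Pi.smul_apply, smul_eq_mul, RingHom.id_apply]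
    rw [Finset.mul_sum]
    exact Finset.sum_congr rfl fun i _ => mul_left_comm _ _ _

private lemma SaL_apply {n n' : ℕ} (x : Fin (n - 3 + (n' - 3)) → ZMod 2)
    (c : Fin n → ZMod 2) :
    SaL x c = ∑ i : Fin (n - 3),
      x (Fin.castAdd (n' - 3) i) * c ⟨(i : ℕ), by have := i.isLt; omega⟩ := rfl

private lemma SbL_apply {n n' : ℕ} (x : Fin (n - 3 + (n' - 3)) → ZMod 2)
    (c' : Fin n' → ZMod 2) :
    SbL (n := n) x c' = ∑ j : Fin (n' - 3),
      x (Fin.natAdd (n - 3) j) * c' ⟨(j : ℕ) + 3, by have := j.isLt; omega⟩ := rfl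

private lemma pair_glue {n n' : ℕ} (x : Fin (n - 3 + (n' - 3)) → ZMod 2)
    (c : Fin n → ZMod 2) (c' : Fin n' → ZMod 2)
    (w : Fin (n - 3 + (n' - 3)) → ZMod 2)
    (hw : ∀ i : Fin (n - 3 + (n' - 3)),
      w i = if h : (i : ℕ) < n - 3 then c ⟨(i : ℕ), by omega⟩
            else c' ⟨(i : ℕ) - (n - 3) + 3, by have := i.isLt; omega⟩) :
    ∑ i, x i * w i = SaL x c + SbL (n := n) x c' := by
  rw [Fin.sum_univ_add, SaL_apply, SbL_apply]
  refine congrArg₂ (· + ·) (Finset.sum_congr rfl fun i _ => ?_)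
    (Finset.sum_congr rfl fun j _ => ?_)
  · rw [hw, dif_pos (show ((Fin.castAdd (n' - 3) i : Fin _) : ℕ) < n - 3 from i.isLt)]
    exact congrArg₂ (· * ·) rfl (congrArg c (Fin.ext (by simp)))
  · rw [hw, dif_neg (show ¬ ((Fin.natAdd (n - 3) j : Fin _) : ℕ) < n - 3 by simp)]
    exact congrArg₂ (· * ·) rfl (congrArg c' (Fin.ext (by simp)))

private lemma mem_threeSum {n n' : ℕ} (C : Code n) (C' : Code n')
    (hn : 7 ≤ n) (hn' : 7 ≤ n') (w : Fin (n - 3 + (n' - 3)) → ZMod 2) :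
    w ∈ threeSum C C' hn hn' ↔ ∃ c ∈ C, ∃ c' ∈ C',
      (∀ t : Fin 3, c ⟨n - 3 + (t : ℕ), by have := t.isLt; omega⟩
          = c' ⟨(t : ℕ), by have := t.isLt; omega⟩) ∧
      ∀ i : Fin (n - 3 + (n' - 3)),
        w i = if h : (i : ℕ) < n - 3 then c ⟨(i : ℕ), by omega⟩
              else c' ⟨(i : ℕ) - (n - 3) + 3, by have := i.isLt; omega⟩ := Iff.rfl

private lemma mem_dual_threeSum {n n' : ℕ} (C : Code n) (C' : Code n')
    (hn : 7 ≤ n) (hn' : 7 ≤ n') (x : Fin (n - 3 + (n' - 3)) → ZMod 2) :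
    x ∈ dualCode (threeSum C C' hn hn') ↔ ∀ c ∈ C, ∀ c' ∈ C',
      (∀ t : Fin 3, c ⟨n - 3 + (t : ℕ), by have := t.isLt; omega⟩
          = c' ⟨(t : ℕ), by have := t.isLt; omega⟩) →
      SaL x c + SbL (n := n) x c' = 0 := by
  rw [mem_dualCode]
  constructor
  · intro hx c hc c' hc' hmatch
    have hw : (fun i : Fin (n - 3 + (n' - 3)) =>
        if h : (i : ℕ) < n - 3 then c ⟨(i : ℕ), by omega⟩
        else c' ⟨(i : ℕ) - (n - 3) + 3, by have := i.isLt; omega⟩) ∈ threeSum C C' hn hn' :=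
      (mem_threeSum C C' hn hn' _).mpr ⟨c, hc, c', hc', hmatch, fun i => rfl⟩
    have := hx _ hw
    rwa [pair_glue x c c' _ (fun i => rfl)] at this
  · intro H w hw
    obtain ⟨c, hc, c', hc', hmatch, hform⟩ := (mem_threeSum C C' hn hn' w).mp hw
    rw [pair_glue x c c' w hform]
    exact H c hc c' hc' hmatch

private lemma mem_extend {k : ℕ} (D : Code k) (v u : Fin k → ZMod 2)
    (hu : u ∈ D ⊔ Submodule.span (ZMod 2) {v}) : u ∈ D ∨ u + v ∈ D := by
  rw [Submodule.mem_sup] at hu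
  obtain ⟨p, hp, q, hq, rfl⟩ := hu
  rw [Submodule.mem_span_singleton] at hq
  obtain ⟨t, rfl⟩ := hq
  have hvv : v + v = 0 := by funext i; exact zmod2_add_self _
  rcases zmod2_cases t with rfl | rfl
  · left; simpa using hp
  · right
    have : p + (1 : ZMod 2) • v + v = p := by
      rw [one_smul, add_assoc, hvv, add_zero]
    rwa [this]

end Aux3

/-- the dual of a 3-sum is the 3̄-sum of the duals. -/
theorem threeSum_dual {n n' : ℕ} (C : Code n) (C' : Code n') (h : ThreeSummable C C') :
    ThreeBarSummable (dualCode C) (dualCode C') ∧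
    dualCode (threeSum C C' h.1 h.2.1) =
      threeBarSum (dualCode C) (dualCode C') h.1 h.2.1 := by
  classical
  have hn : 7 ≤ n := h.1
  have hn' : 7 ≤ n' := h.2.1
  have hA1 : NoLowWtTail C := h.2.2.1
  have hA1d : NoLowWtTail (dualCode C) := h.2.2.2.1
  have hA2 : NoLowWtHead C' := h.2.2.2.2.1
  have hA2d : NoLowWtHead (dualCode C') := h.2.2.2.2.2.1
  have hωC : omegaLast n ∈ C := h.2.2.2.2.2.2.1
  have hωC' : omegaFirst n' ∈ C' := h.2.2.2.2.2.2.2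
  constructor
  · exact ⟨hn, hn', hA1d, by rw [dualCode_dualCode]; exact hA1,
      hA2d, by rw [dualCode_dualCode]; exact hA2,
      by rw [dualCode_dualCode]; exact hωC,
      by rw [dualCode_dualCode]; exact hωC'⟩
  ext x
  rw [mem_dual_threeSum C C' h.1 h.2.1 x]
  constructor
  · -- forward: x is in the 3̄-sum of the duals
    intro H
    choose cB hcB hcBmid using fun t : Fin 3 => midSurj hn C hA1d hωC (Pi.single t 1)
    choose cB' hcB' hcBhead using fun t : Fin 3 => headSurj hn' C' hA2d hωC' (Pi.single t 1)
    have claim3 : ∀ t : Fin 3, SbL (n := n) x (cB' t) = SaL x (cB t) := by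
      intro t
      have hmt : ∀ s : Fin 3, (cB t) ⟨n - 3 + (s : ℕ), by have := s.isLt; omega⟩
          = (cB' t) ⟨(s : ℕ), by have := s.isLt; omega⟩ := fun s => by
        rw [hcBmid t s, hcBhead t s]
      have h0 := H (cB t) (hcB t) (cB' t) (hcB' t) hmt
      rw [add_comm] at h0
      exact zmod2_eq_of_add _ _ h0
    have claim1 : ∀ c ∈ C, SaL x c
        = ∑ t : Fin 3, c ⟨n - 3 + (t : ℕ), by have := t.isLt; omega⟩ * SaL x (cB t) := by
      intro c hc
      set w : Fin n → ZMod 2 :=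
        c + ∑ t : Fin 3, c ⟨n - 3 + (t : ℕ), by have := t.isLt; omega⟩ • cB t with hwdef
      have hwC : w ∈ C := C.add_mem hc (Submodule.sum_mem _ fun t _ => C.smul_mem _ (hcB t))
      have hwmid : ∀ s : Fin 3, w ⟨n - 3 + (s : ℕ), by have := s.isLt; omega⟩ = 0 := by
        intro s
        simp only [hwdef, Pi.add_apply, Finset.sum_apply, Pi.smul_apply, smul_eq_mul]
        have hsum : (∑ t : Fin 3, c ⟨n - 3 + (t : ℕ), by have := t.isLt; omega⟩ *
            (cB t) ⟨n - 3 + (s : ℕ), by have := s.isLt; omega⟩)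
            = c ⟨n - 3 + (s : ℕ), by have := s.isLt; omega⟩ := by
          calc (∑ t : Fin 3, c ⟨n - 3 + (t : ℕ), by have := t.isLt; omega⟩ *
              (cB t) ⟨n - 3 + (s : ℕ), by have := s.isLt; omega⟩)
              = ∑ t : Fin 3, if s = t then c ⟨n - 3 + (t : ℕ), by have := t.isLt; omega⟩
                  else 0 :=
                Finset.sum_congr rfl fun t _ => by
                  rw [hcBmid t s, Pi.single_apply, mul_ite, mul_one, mul_zero]
            _ = _ := by rw [Finset.sum_ite_eq]; simp
        rw [hsum]
        exact zmod2_add_self _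
      have hlin : SaL x w = SaL x c + ∑ t : Fin 3,
          c ⟨n - 3 + (t : ℕ), by have := t.isLt; omega⟩ * SaL x (cB t) := by
        rw [hwdef, map_add, map_sum]
        refine congrArg₂ (· + ·) rfl (Finset.sum_congr rfl fun t _ => ?_)
        rw [map_smul, smul_eq_mul]
      have h0 := H w hwC 0 C'.zero_mem (fun t => (hwmid t).trans rfl)
      rw [map_zero, add_zero, hlin] at h0
      exact zmod2_eq_of_add _ _ h0
    have claim2 : ∀ c' ∈ C', SbL (n := n) x c'
        = ∑ t : Fin 3, c' ⟨(t : ℕ), by have := t.isLt; omega⟩ * SaL x (cB t) := by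
      intro c' hc'
      set w : Fin n' → ZMod 2 :=
        c' + ∑ t : Fin 3, c' ⟨(t : ℕ), by have := t.isLt; omega⟩ • cB' t with hwdef
      have hwC : w ∈ C' := C'.add_mem hc' (Submodule.sum_mem _ fun t _ => C'.smul_mem _ (hcB' t))
      have hwhead : ∀ s : Fin 3, w ⟨(s : ℕ), by have := s.isLt; omega⟩ = 0 := by
        intro s
        simp only [hwdef, Pi.add_apply, Finset.sum_apply, Pi.smul_apply, smul_eq_mul]
        have hsum : (∑ t : Fin 3, c' ⟨(t : ℕ), by have := t.isLt; omega⟩ *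
            (cB' t) ⟨(s : ℕ), by have := s.isLt; omega⟩)
            = c' ⟨(s : ℕ), by have := s.isLt; omega⟩ := by
          calc (∑ t : Fin 3, c' ⟨(t : ℕ), by have := t.isLt; omega⟩ *
              (cB' t) ⟨(s : ℕ), by have := s.isLt; omega⟩)
              = ∑ t : Fin 3, if s = t then c' ⟨(t : ℕ), by have := t.isLt; omega⟩
                  else 0 :=
                Finset.sum_congr rfl fun t _ => by
                  rw [hcBhead t s, Pi.single_apply, mul_ite, mul_one, mul_zero]
            _ = _ := by rw [Finset.sum_ite_eq]; simp
        rw [hsum]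
        exact zmod2_add_self _
      have hlin : SbL (n := n) x w = SbL (n := n) x c' + ∑ t : Fin 3,
          c' ⟨(t : ℕ), by have := t.isLt; omega⟩ * SbL (n := n) x (cB' t) := by
        rw [hwdef, map_add, map_sum]
        refine congrArg₂ (· + ·) rfl (Finset.sum_congr rfl fun t _ => ?_)
        rw [map_smul, smul_eq_mul]
      have h0 := H 0 C.zero_mem w hwC (fun t => ((hwhead t).symm : _))
      rw [map_zero, zero_add, hlin] at h0
      rw [add_comm] at h0
      have h1 := zmod2_eq_of_add _ _ h0
      rw [← h1]
      exact Finset.sum_congr rfl fun t _ => by rw [claim3 t]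
    -- build the two halves
    set d : Fin n → ZMod 2 := fun i =>
      if hi : (i : ℕ) < n - 3 then x ⟨(i : ℕ), by omega⟩
      else SaL x (cB ⟨(i : ℕ) - (n - 3), by have := i.isLt; omega⟩) with hd
    set d' : Fin n' → ZMod 2 := fun i =>
      if hi : (i : ℕ) < 3 then SaL x (cB ⟨(i : ℕ), hi⟩)
      else x ⟨n - 3 + ((i : ℕ) - 3), by have := i.isLt; omega⟩ with hd'
    have hdlow : ∀ i : Fin (n - 3),
        d ⟨(i : ℕ), by have := i.isLt; omega⟩ = x (Fin.castAdd (n' - 3) i) := by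
      intro i
      simp only [hd]
      rw [dif_pos i.isLt]
      rfl
    have hdmid : ∀ t : Fin 3,
        d ⟨n - 3 + (t : ℕ), by have := t.isLt; omega⟩ = SaL x (cB t) := by
      intro t
      simp only [hd]
      rw [dif_neg (by omega)]
      exact congrArg (fun u => SaL x (cB u)) (Fin.ext (by simp))
    have hdlow' : ∀ t : Fin 3,
        d' ⟨(t : ℕ), by have := t.isLt; omega⟩ = SaL x (cB t) := by
      intro t
      simp only [hd']
      rw [dif_pos t.isLt]
    have hdhigh' : ∀ j : Fin (n' - 3),
        d' ⟨3 + (j : ℕ), by have := j.isLt; omega⟩ = x (Fin.natAdd (n - 3) j) := by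
      intro j
      simp only [hd']
      rw [dif_neg (by omega)]
      exact congrArg x (Fin.ext (by simp))
    have hdC : d ∈ dualCode C := by
      refine (mem_dualCode _ _).mpr fun c hc => ?_
      calc ∑ i, d i * c i
          = (∑ i : Fin (n - 3), d ⟨(i : ℕ), by have := i.isLt; omega⟩ *
              c ⟨(i : ℕ), by have := i.isLt; omega⟩) +
            ∑ t : Fin 3, d ⟨n - 3 + (t : ℕ), by have := t.isLt; omega⟩ *
              c ⟨n - 3 + (t : ℕ), by have := t.isLt; omega⟩ :=
            sum_split_tail (by omega) _
        _ = SaL x c + ∑ t : Fin 3, SaL x (cB t) *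
              c ⟨n - 3 + (t : ℕ), by have := t.isLt; omega⟩ := by
            refine congrArg₂ (· + ·) (Finset.sum_congr rfl fun i _ => ?_)
              (Finset.sum_congr rfl fun t _ => ?_)
            · rw [hdlow i]
            · rw [hdmid t]
        _ = 0 := by
            rw [claim1 c hc, ← Finset.sum_add_distrib]
            apply Finset.sum_eq_zero
            intro t _
            rw [mul_comm]
            exact zmod2_add_self _
    have hdC' : d' ∈ dualCode C' := by
      refine (mem_dualCode _ _).mpr fun c' hc' => ?_
      calc ∑ i, d' i * c' i
          = (∑ t : Fin 3, d' ⟨(t : ℕ), by have := t.isLt; omega⟩ *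
              c' ⟨(t : ℕ), by have := t.isLt; omega⟩) +
            ∑ j : Fin (n' - 3), d' ⟨3 + (j : ℕ), by have := j.isLt; omega⟩ *
              c' ⟨3 + (j : ℕ), by have := j.isLt; omega⟩ :=
            sum_split_head (by omega) _
        _ = (∑ t : Fin 3, SaL x (cB t) * c' ⟨(t : ℕ), by have := t.isLt; omega⟩) +
            SbL (n := n) x c' := by
            refine congrArg₂ (· + ·) (Finset.sum_congr rfl fun t _ => ?_)
              ((Finset.sum_congr rfl fun j _ => ?_).trans (SbL_apply x c').symm)
            · rw [hdlow' t]
            · rw [hdhigh' j]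
              exact congrArg₂ (· * ·) rfl (congrArg c' (Fin.ext (by simp [Nat.add_comm])))
        _ = 0 := by
            rw [claim2 c' hc', ← Finset.sum_add_distrib]
            apply Finset.sum_eq_zero
            intro t _
            rw [mul_comm]
            exact zmod2_add_self _
    refine (mem_threeSum _ _ h.1 h.2.1 x).mpr
      ⟨d, Submodule.mem_sup_left hdC, d', Submodule.mem_sup_left hdC', ?_, ?_⟩
    · intro t
      rw [hdmid t, hdlow' t]
    · intro i
      by_cases hcase : (i : ℕ) < n - 3
      · rw [dif_pos hcase]
        simp only [hd]
        rw [dif_pos hcase]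
      · rw [dif_neg hcase]
        simp only [hd']
        rw [dif_neg (by omega)]
        refine congrArg x (Fin.ext ?_)
        simp
        omega
  · -- backward: elements of the 3̄-sum pair to zero with the 3-sum
    intro hx
    obtain ⟨d, hdmem, d', hdmem', hmatch, hform⟩ :=
      (mem_threeSum (extendLast (dualCode C)) (extendFirst (dualCode C')) h.1 h.2.1 x).mp hx
    obtain ⟨s, d₁, hd₁, hd₁low, hd₁mid⟩ :
        ∃ (s : ZMod 2) (d₁ : Fin n → ZMod 2), d₁ ∈ dualCode C ∧
          (∀ i : Fin (n - 3), d₁ ⟨(i : ℕ), by have := i.isLt; omega⟩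
            = d ⟨(i : ℕ), by have := i.isLt; omega⟩) ∧
          (∀ t : Fin 3, d₁ ⟨n - 3 + (t : ℕ), by have := t.isLt; omega⟩
            = d ⟨n - 3 + (t : ℕ), by have := t.isLt; omega⟩ + s) := by
      rcases mem_extend _ _ _ hdmem with hcase | hcase
      · exact ⟨0, d, hcase, fun i => rfl, fun t => by rw [add_zero]⟩
      · refine ⟨1, d + omegaLast n, hcase, fun i => ?_, fun t => ?_⟩
        · rw [Pi.add_apply,
            show omegaLast n ⟨(i : ℕ), by have := i.isLt; omega⟩ = 0 from
              if_neg (show ¬ n - 3 ≤ (i : ℕ) from by have := i.isLt; omega), add_zero]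
        · rw [Pi.add_apply]
          exact congrArg _ (show omegaLast n ⟨n - 3 + (t : ℕ), by have := t.isLt; omega⟩ = 1 from
            if_pos (show n - 3 ≤ n - 3 + (t : ℕ) from Nat.le_add_right _ _))
    obtain ⟨s', d'₁, hd'₁, hd'₁head, hd'₁high⟩ :
        ∃ (s' : ZMod 2) (d'₁ : Fin n' → ZMod 2), d'₁ ∈ dualCode C' ∧
          (∀ t : Fin 3, d'₁ ⟨(t : ℕ), by have := t.isLt; omega⟩
            = d' ⟨(t : ℕ), by have := t.isLt; omega⟩ + s') ∧
          (∀ j : Fin (n' - 3), d'₁ ⟨3 + (j : ℕ), by have := j.isLt; omega⟩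
            = d' ⟨3 + (j : ℕ), by have := j.isLt; omega⟩) := by
      rcases mem_extend _ _ _ hdmem' with hcase | hcase
      · exact ⟨0, d', hcase, fun t => by rw [add_zero], fun j => rfl⟩
      · refine ⟨1, d' + omegaFirst n', hcase, fun t => ?_, fun j => ?_⟩
        · rw [Pi.add_apply]
          exact congrArg _ (show omegaFirst n' ⟨(t : ℕ), by have := t.isLt; omega⟩ = 1 from
            if_pos (show (t : ℕ) < 3 from t.isLt))
        · rw [Pi.add_apply,
            show omegaFirst n' ⟨3 + (j : ℕ), by have := j.isLt; omega⟩ = 0 from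
              if_neg (show ¬ 3 + (j : ℕ) < 3 from by omega), add_zero]
    have hxc : ∀ i : Fin (n - 3),
        x (Fin.castAdd (n' - 3) i) = d₁ ⟨(i : ℕ), by have := i.isLt; omega⟩ := by
      intro i
      rw [hform (Fin.castAdd (n' - 3) i),
        dif_pos (show ((Fin.castAdd (n' - 3) i : Fin _) : ℕ) < n - 3 from i.isLt),
        hd₁low i]
      exact congrArg d (Fin.ext (by simp))
    have hxc' : ∀ j : Fin (n' - 3),
        x (Fin.natAdd (n - 3) j) = d'₁ ⟨3 + (j : ℕ), by have := j.isLt; omega⟩ := by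
      intro j
      rw [hform (Fin.natAdd (n - 3) j),
        dif_neg (show ¬ ((Fin.natAdd (n - 3) j : Fin _) : ℕ) < n - 3 by simp),
        hd'₁high j]
      exact congrArg d' (Fin.ext (show n - 3 + (j : ℕ) - (n - 3) + 3 = 3 + (j : ℕ) by omega))
    have F1 : ∀ c ∈ C, SaL x c = ∑ t : Fin 3,
        d₁ ⟨n - 3 + (t : ℕ), by have := t.isLt; omega⟩ *
          c ⟨n - 3 + (t : ℕ), by have := t.isLt; omega⟩ := by
      intro c hc
      have h0 := (mem_dualCode _ _).mp hd₁ c hc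
      rw [sum_split_tail (by omega) (fun i => d₁ i * c i)] at h0
      have hS1 : (∑ i : Fin (n - 3), d₁ ⟨(i : ℕ), by have := i.isLt; omega⟩ *
          c ⟨(i : ℕ), by have := i.isLt; omega⟩) = SaL x c :=
        Finset.sum_congr rfl fun i _ => by rw [hxc i]
      rw [hS1] at h0
      exact zmod2_eq_of_add _ _ h0
    have F2 : ∀ c' ∈ C', SbL (n := n) x c' = ∑ t : Fin 3,
        d'₁ ⟨(t : ℕ), by have := t.isLt; omega⟩ *
          c' ⟨(t : ℕ), by have := t.isLt; omega⟩ := by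
      intro c' hc'
      have h0 := (mem_dualCode _ _).mp hd'₁ c' hc'
      rw [sum_split_head (by omega) (fun i => d'₁ i * c' i)] at h0
      have hS2 : (∑ j : Fin (n' - 3), d'₁ ⟨3 + (j : ℕ), by have := j.isLt; omega⟩ *
          c' ⟨3 + (j : ℕ), by have := j.isLt; omega⟩) = SbL (n := n) x c' :=
        Finset.sum_congr rfl fun j _ => by
          rw [hxc' j]
          exact congrArg₂ (· * ·) rfl (congrArg c' (Fin.ext (by simp [Nat.add_comm])))
      rw [hS2, add_comm] at h0
      exact zmod2_eq_of_add _ _ h0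
    have F3 : (∑ t : Fin 3, d₁ ⟨n - 3 + (t : ℕ), by have := t.isLt; omega⟩) = 0 := by
      have h0 := (mem_dualCode _ _).mp hd₁ (omegaLast n) hωC
      rw [sum_split_tail (by omega) (fun i => d₁ i * omegaLast n i)] at h0
      rw [Finset.sum_eq_zero (fun (i : Fin (n - 3)) _ => by
        rw [show omegaLast n ⟨(i : ℕ), by have := i.isLt; omega⟩ = 0 from
          if_neg (show ¬ n - 3 ≤ (i : ℕ) from by have := i.isLt; omega), mul_zero]),
        zero_add] at h0
      rw [Finset.sum_congr rfl (fun (t : Fin 3) _ => by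
        rw [show omegaLast n ⟨n - 3 + (t : ℕ), by have := t.isLt; omega⟩ = 1 from
          if_pos (show n - 3 ≤ n - 3 + (t : ℕ) from Nat.le_add_right _ _), mul_one])] at h0
      exact h0
    have F4 : (∑ t : Fin 3, d'₁ ⟨(t : ℕ), by have := t.isLt; omega⟩) = 0 := by
      have h0 := (mem_dualCode _ _).mp hd'₁ (omegaFirst n') hωC'
      rw [sum_split_head (by omega) (fun i => d'₁ i * omegaFirst n' i)] at h0
      rw [Finset.sum_eq_zero (fun (j : Fin (n' - 3)) _ => by
        rw [show omegaFirst n' ⟨3 + (j : ℕ), by have := j.isLt; omega⟩ = 0 from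
          if_neg (show ¬ 3 + (j : ℕ) < 3 from by omega), mul_zero]), add_zero] at h0
      rw [Finset.sum_congr rfl (fun (t : Fin 3) _ => by
        rw [show omegaFirst n' ⟨(t : ℕ), by have := t.isLt; omega⟩ = 1 from
          if_pos (show (t : ℕ) < 3 from t.isLt), mul_one])] at h0
      exact h0
    have key : ∀ t : Fin 3, d₁ ⟨n - 3 + (t : ℕ), by have := t.isLt; omega⟩ +
        d'₁ ⟨(t : ℕ), by have := t.isLt; omega⟩ = s + s' := by
      intro t
      rw [hd₁mid t, hd'₁head t, hmatch t,
        show (d' ⟨(t : ℕ), by have := t.isLt; omega⟩ + s) +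
            (d' ⟨(t : ℕ), by have := t.isLt; omega⟩ + s')
          = (d' ⟨(t : ℕ), by have := t.isLt; omega⟩ +
              d' ⟨(t : ℕ), by have := t.isLt; omega⟩) + (s + s') from by ring,
        zmod2_add_self, zero_add]
    have hss : s + s' = 0 := by
      have hsum : (∑ t : Fin 3, (d₁ ⟨n - 3 + (t : ℕ), by have := t.isLt; omega⟩ +
          d'₁ ⟨(t : ℕ), by have := t.isLt; omega⟩)) = 0 := by
        rw [Finset.sum_add_distrib, F3, F4, add_zero]
      rw [Finset.sum_congr rfl (fun t _ => key t), Fin.sum_univ_three,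
        show (s + s') + (s + s') + (s + s') = ((s + s') + (s + s')) + (s + s') from by ring,
        zmod2_add_self, zero_add] at hsum
      exact hsum
    intro c hc c' hc' hm
    rw [F1 c hc, F2 c' hc', ← Finset.sum_add_distrib]
    apply Finset.sum_eq_zero
    intro t _
    rw [← hm t, ← add_mul, key t, hss, zero_mul]
end

section
/- Let C ⊆ 𝔽₂ⁿ be a binary linear code having an exact 3-separation (J, Jᶜ) with min{|J|, |Jᶜ|} ≥ 4. Then there exist 3-summable binary linear codes C₁ of length |J| + 3 and C₂ of length |Jᶜ| + 3 such that C is equivalent to C₁ ⊕₃ C₂. -/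
open scoped BigOperators

/-!
Let `p` and `q` be the projections of `C` onto `J` and `Jᶜ`. Since `c ↦ (p c, q c)` is injective,
exactness of the separation says that `C ⧸ (ker p ⊔ ker q)` has dimension `2`; let
`ρ : C → 𝔽₂²` be the quotient map. The map `(v, l) ↦ (v₀, v₁, v₀ + v₁) + l • (1, 1, 1)` is a
bijection `𝔽₂² × 𝔽₂ → 𝔽₂³`; write `τ (c, l)` for its value at `(ρ c, l)`. Take
`C₁ = {(p c, τ (c, l))}` and `C₂ = {(τ (c, l), q c)}`. A word of `C₁ ⊕₃ C₂` is `(p c, q c')` with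
`ρ c = ρ c'`, that is `c - c' ∈ ker p ⊔ ker q`, so it equals `(p d, q d)` for some `d ∈ C`.
Condition (A1) holds because `ρ` vanishes on `ker p` (and on `ker q` for (A2)), and for the duals
because `τ` is onto `𝔽₂³`.
-/

open Module
open LinearMap (funLeft)

section ConnectingQuotient

theorem exists_eq_eq_of_sub_mem_ker_sup_ker {R V A B : Type*} [Ring R] [AddCommGroup V]
    [Module R V] [AddCommGroup A] [Module R A] [AddCommGroup B] [Module R B]
    (p : V →ₗ[R] A) (q : V →ₗ[R] B) {c c' : V}
    (h : c - c' ∈ LinearMap.ker p ⊔ LinearMap.ker q) : ∃ d, p d = p c ∧ q d = q c' := by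
  obtain ⟨x, hx, y, hy, hxy⟩ := Submodule.mem_sup.mp h
  refine ⟨c - x, by simp [LinearMap.mem_ker.mp hx], ?_⟩
  rw [show c - x = c' + y by rw [← eq_sub_iff_add_eq.mp hxy]; abel]
  simp [LinearMap.mem_ker.mp hy]

variable {K V A B : Type*} [Field K] [AddCommGroup V] [Module K V] [FiniteDimensional K V]
  [AddCommGroup A] [Module K A] [AddCommGroup B] [Module K B]

theorem finrank_quotient_ker_sup_ker_add_finrank (p : V →ₗ[K] A) (q : V →ₗ[K] B)
    (hpq : Disjoint (LinearMap.ker p) (LinearMap.ker q)) :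
    finrank K (V ⧸ LinearMap.ker p ⊔ LinearMap.ker q) + finrank K V =
      finrank K (LinearMap.range p) + finrank K (LinearMap.range q) := by
  have hquot := Submodule.finrank_quotient_add_finrank (LinearMap.ker p ⊔ LinearMap.ker q)
  have hsup := Submodule.finrank_sup_add_finrank_inf_eq (LinearMap.ker p) (LinearMap.ker q)
  have hp := LinearMap.finrank_range_add_finrank_ker p
  have hq := LinearMap.finrank_range_add_finrank_ker q
  rw [hpq.eq_bot, finrank_bot] at hsup
  omega

theorem exists_surjective_ker_eq_ker_sup_ker (p : V →ₗ[K] A) (q : V →ₗ[K] B)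
    (hpq : Disjoint (LinearMap.ker p) (LinearMap.ker q)) {k : ℕ}
    (hk : finrank K (LinearMap.range p) + finrank K (LinearMap.range q) = finrank K V + k) :
    ∃ ρ : V →ₗ[K] (Fin k → K),
      Function.Surjective ρ ∧ LinearMap.ker ρ = LinearMap.ker p ⊔ LinearMap.ker q := by
  have hdim : finrank K (V ⧸ LinearMap.ker p ⊔ LinearMap.ker q) = k := by
    have := finrank_quotient_ker_sup_ker_add_finrank p q hpq
    omega
  let e := (Module.finBasisOfFinrankEq K _ hdim).equivFun
  refine ⟨e.toLinearMap ∘ₗ (LinearMap.ker p ⊔ LinearMap.ker q).mkQ,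
    e.surjective.comp (Submodule.mkQ_surjective _), ?_⟩
  rw [LinearMap.ker_comp, LinearEquiv.ker, Submodule.comap_bot, Submodule.ker_mkQ]

end ConnectingQuotient

def evenAddOnesEquiv : ((Fin 2 → ZMod 2) × ZMod 2) ≃ₗ[ZMod 2] (Fin 3 → ZMod 2) where
  toFun x := ![x.1 0 + x.2, x.1 1 + x.2, x.1 0 + x.1 1 + x.2]
  invFun w := (![w 0 + (w 0 + w 1 + w 2), w 1 + (w 0 + w 1 + w 2)], w 0 + w 1 + w 2)
  map_add' x y := by ext i; fin_cases i <;> simp <;> ring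
  map_smul' r x := by ext i; fin_cases i <;> simp <;> ring
  left_inv := by decide
  right_inv := by decide

theorem evenAddOnesEquiv_zero_left (l : ZMod 2) : evenAddOnesEquiv (0, l) = fun _ => l := by
  ext i; fin_cases i <;> simp [evenAddOnesEquiv]

section Glue

/-- The length is any `N` equal to `m + k`, so that a triple can also be put in front of a word of
length `b + 3`. -/
def appendLinear (R : Type*) [Semiring R] {m k N : ℕ} (h : m + k = N) :
    ((Fin m → R) × (Fin k → R)) →ₗ[R] (Fin N → R) where
  toFun u i := if hi : (i : ℕ) < m then u.1 ⟨i, hi⟩ else u.2 ⟨i - m, by omega⟩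
  map_add' u v := by ext i; by_cases hi : (i : ℕ) < m <;> simp [hi]
  map_smul' r u := by ext i; by_cases hi : (i : ℕ) < m <;> simp [hi]

variable {R : Type*} [Semiring R] {m k N : ℕ} (h : m + k = N)

theorem appendLinear_apply_of_lt (u : (Fin m → R) × (Fin k → R)) (i : Fin N) (hi : (i : ℕ) < m) :
    appendLinear R h u i = u.1 ⟨i, hi⟩ := dif_pos hi

theorem appendLinear_apply_of_le (u : (Fin m → R) × (Fin k → R)) (i : Fin N) (hi : m ≤ (i : ℕ)) :
    appendLinear R h u i = u.2 ⟨i - m, by omega⟩ := dif_neg (by omega)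

theorem appendLinear_comp_castAdd_comp_natAdd {a b : ℕ} (x : Fin (a + b) → R) :
    appendLinear R rfl (x ∘ Fin.castAdd b, x ∘ Fin.natAdd a) = x := by
  funext i
  by_cases hi : (i : ℕ) < a
  · simp [appendLinear_apply_of_lt _ _ i hi, Fin.castAdd]
  · rw [appendLinear_apply_of_le _ _ i (not_lt.mp hi)]
    simp only [Function.comp_apply]
    congr 1
    ext
    simp only [Fin.natAdd_mk]
    omega

end Glue

theorem eq_zero_of_mem_dualCode {N : ℕ} {D : Code N} {d c : Fin N → ZMod 2}
    (hd : d ∈ dualCode D) (hc : c ∈ D) {i : Fin N} (hci : c i = 1)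
    (hdc : ∀ j ≠ i, d j = 0 ∨ c j = 0) : d i = 0 := by
  have hsum : ∑ j, d j * c j = d i * c i :=
    Finset.sum_eq_single i (fun j _ hj => by rcases hdc j hj with h | h <;> simp [h]) (by simp)
  simpa [hsum, hci] using hd c hc

section GluedCodes

variable {W W' : Type*} [AddCommGroup W] [Module (ZMod 2) W] [AddCommGroup W']
  [Module (ZMod 2) W']

def glueCode {m k N : ℕ} (h : m + k = N) (f : W →ₗ[ZMod 2] (Fin m → ZMod 2))
    (g : W →ₗ[ZMod 2] (Fin k → ZMod 2)) : Code N :=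
  LinearMap.range (appendLinear (ZMod 2) h ∘ₗ f.prod g)

theorem appendLinear_mem_glueCode {m k N : ℕ} (h : m + k = N) (f : W →ₗ[ZMod 2] (Fin m → ZMod 2))
    (g : W →ₗ[ZMod 2] (Fin k → ZMod 2)) (w : W) :
    appendLinear (ZMod 2) h (f w, g w) ∈ glueCode h f g :=
  ⟨w, rfl⟩

variable {a b : ℕ}

theorem noLowWtTail_glueCode (f : W →ₗ[ZMod 2] (Fin a → ZMod 2))
    (g : W →ₗ[ZMod 2] (Fin 3 → ZMod 2)) (hfg : ∀ w, f w = 0 → ∃ l, g w = fun _ => l) :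
    NoLowWtTail (glueCode rfl f g) := by
  rintro _ ⟨w, rfl⟩ hhead
  have hf : f w = 0 := funext fun j => by
    simpa [appendLinear_apply_of_lt] using hhead ⟨j, by omega⟩ (by simp)
  obtain ⟨l, hl⟩ := hfg w hf
  have htail : ∀ i : Fin (a + 3), a + 3 - 3 ≤ (i : ℕ) → appendLinear _ rfl (f w, g w) i = l :=
    fun i hi => by simp [appendLinear_apply_of_le _ _ i (by omega : a ≤ (i : ℕ)), hl]
  fin_cases l
  exacts [Or.inl htail, Or.inr htail]

theorem noLowWtHead_glueCode (g : W →ₗ[ZMod 2] (Fin 3 → ZMod 2))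
    (f : W →ₗ[ZMod 2] (Fin b → ZMod 2)) (hfg : ∀ w, f w = 0 → ∃ l, g w = fun _ => l) :
    NoLowWtHead (glueCode (add_comm 3 b) g f) := by
  rintro _ ⟨w, rfl⟩ htail
  have hf : f w = 0 := funext fun j => by
    simpa [appendLinear_apply_of_le] using htail ⟨j + 3, by omega⟩ (by simp)
  obtain ⟨l, hl⟩ := hfg w hf
  have hhead : ∀ i : Fin (b + 3), (i : ℕ) < 3 → appendLinear _ (add_comm 3 b) (g w, f w) i = l :=
    fun i hi => by simp [appendLinear_apply_of_lt _ _ i hi, hl]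
  fin_cases l
  exacts [Or.inl hhead, Or.inr hhead]

theorem noLowWtTail_dualCode_glueCode (f : W →ₗ[ZMod 2] (Fin a → ZMod 2))
    (g : W →ₗ[ZMod 2] (Fin 3 → ZMod 2)) (hg : Function.Surjective g) :
    NoLowWtTail (dualCode (glueCode rfl f g)) := by
  refine fun d hd hhead => Or.inl fun i hi => ?_
  obtain ⟨w, hw⟩ := hg (Pi.single ⟨i - a, by omega⟩ 1)
  refine eq_zero_of_mem_dualCode hd (appendLinear_mem_glueCode rfl f g w) ?_ fun j hj => ?_
  · simp [appendLinear_apply_of_le _ _ i (by omega : a ≤ (i : ℕ)), hw]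
  · by_cases hja : (j : ℕ) < a
    · exact Or.inl (hhead j (by omega))
    · right
      simp only [hw, appendLinear_apply_of_le _ _ j (by omega : a ≤ (j : ℕ)), Pi.single_apply,
        Fin.ext_iff, ite_eq_right_iff, one_ne_zero, imp_false]
      omega

theorem noLowWtHead_dualCode_glueCode (g : W →ₗ[ZMod 2] (Fin 3 → ZMod 2))
    (f : W →ₗ[ZMod 2] (Fin b → ZMod 2)) (hg : Function.Surjective g) :
    NoLowWtHead (dualCode (glueCode (add_comm 3 b) g f)) := by
  refine fun d hd htail => Or.inl fun i hi => ?_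
  obtain ⟨w, hw⟩ := hg (Pi.single ⟨i, hi⟩ 1)
  refine eq_zero_of_mem_dualCode hd (appendLinear_mem_glueCode _ g f w) ?_ fun j hj => ?_
  · simp [appendLinear_apply_of_lt _ _ i hi, hw]
  · by_cases hj3 : (j : ℕ) < 3
    · right
      simp only [hw, appendLinear_apply_of_lt _ _ j hj3, Pi.single_apply, Fin.ext_iff,
        ite_eq_right_iff, one_ne_zero, imp_false]
      omega
    · exact Or.inl (htail j (by omega))

theorem omegaLast_mem_glueCode (f : W →ₗ[ZMod 2] (Fin a → ZMod 2))
    (g : W →ₗ[ZMod 2] (Fin 3 → ZMod 2)) (w : W) (hf : f w = 0) (hg : g w = fun _ => 1) :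
    omegaLast (a + 3) ∈ glueCode rfl f g := by
  refine ⟨w, funext fun i => ?_⟩
  by_cases hi : (i : ℕ) < a
  · simp [appendLinear_apply_of_lt _ _ i hi, hf, omegaLast, hi]
  · simp [appendLinear_apply_of_le _ _ i (not_lt.mp hi), hg, omegaLast, hi]

theorem omegaFirst_mem_glueCode (g : W →ₗ[ZMod 2] (Fin 3 → ZMod 2))
    (f : W →ₗ[ZMod 2] (Fin b → ZMod 2)) (w : W) (hf : f w = 0) (hg : g w = fun _ => 1) :
    omegaFirst (b + 3) ∈ glueCode (add_comm 3 b) g f := by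
  refine ⟨w, funext fun i => ?_⟩
  by_cases hi : (i : ℕ) < 3
  · simp [appendLinear_apply_of_lt _ _ i hi, hg, omegaFirst, hi]
  · simp [appendLinear_apply_of_le _ _ i (not_lt.mp hi), hf, omegaFirst, hi]


theorem mem_threeSum_glueCode_iff (f : W →ₗ[ZMod 2] (Fin a → ZMod 2))
    (g : W →ₗ[ZMod 2] (Fin 3 → ZMod 2)) (g' : W' →ₗ[ZMod 2] (Fin 3 → ZMod 2))
    (f' : W' →ₗ[ZMod 2] (Fin b → ZMod 2)) (ha : 7 ≤ a + 3) (hb : 7 ≤ b + 3)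
    (x : Fin (a + b) → ZMod 2) :
    x ∈ threeSum (glueCode rfl f g) (glueCode (add_comm 3 b) g' f') ha hb ↔
      ∃ w w', g w = g' w' ∧ appendLinear (ZMod 2) rfl (f w, f' w') = x := by
  constructor
  · rintro ⟨_, ⟨w, rfl⟩, _, ⟨w', rfl⟩, hmatch, hx⟩
    refine ⟨w, w', funext fun t => ?_, funext fun i => ?_⟩
    · simpa [appendLinear_apply_of_le, appendLinear_apply_of_lt] using hmatch t
    · by_cases hi : (i : ℕ) < a
      · simp [hx i, hi, appendLinear_apply_of_lt]
      · simp [hx i, hi, appendLinear_apply_of_le, le_of_not_gt hi]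
  · rintro ⟨w, w', hgg, rfl⟩
    refine ⟨_, ⟨w, rfl⟩, _, ⟨w', rfl⟩, fun t => ?_, fun i => ?_⟩
    · simp [appendLinear_apply_of_le, appendLinear_apply_of_lt, hgg]
    · by_cases hi : (i : ℕ) < a
      · simp [hi, appendLinear_apply_of_lt]
      · simp [hi, appendLinear_apply_of_le, le_of_not_gt hi]

end GluedCodes

section SplitCode

variable {a b : ℕ} (D : Code (a + b))

def headProj : D →ₗ[ZMod 2] (Fin a → ZMod 2) :=
  funLeft (ZMod 2) (ZMod 2) (Fin.castAdd b) ∘ₗ D.subtype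

def tailProj : D →ₗ[ZMod 2] (Fin b → ZMod 2) :=
  funLeft (ZMod 2) (ZMod 2) (Fin.natAdd a) ∘ₗ D.subtype

theorem appendLinear_headProj_tailProj (c : D) :
    appendLinear (ZMod 2) rfl (headProj D c, tailProj D c) = c :=
  appendLinear_comp_castAdd_comp_natAdd (c : Fin (a + b) → ZMod 2)

theorem disjoint_ker_headProj_ker_tailProj :
    Disjoint (LinearMap.ker (headProj D)) (LinearMap.ker (tailProj D)) := by
  refine Submodule.disjoint_def.mpr fun c hp hq => Subtype.ext ?_
  rw [← appendLinear_headProj_tailProj, LinearMap.mem_ker.mp hp, LinearMap.mem_ker.mp hq,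
    ← Prod.zero_eq_mk, map_zero]
  rfl

variable {D}

def sharedTriple (ρ : D →ₗ[ZMod 2] (Fin 2 → ZMod 2)) : D × ZMod 2 →ₗ[ZMod 2] (Fin 3 → ZMod 2) :=
  evenAddOnesEquiv.toLinearMap ∘ₗ ρ.prodMap LinearMap.id

theorem threeSummable_glueCode (ha : 4 ≤ a) (hb : 4 ≤ b) {ρ : D →ₗ[ZMod 2] (Fin 2 → ZMod 2)}
    (hρ : Function.Surjective ρ) (hp : LinearMap.ker (headProj D) ≤ LinearMap.ker ρ)
    (hq : LinearMap.ker (tailProj D) ≤ LinearMap.ker ρ) :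
    ThreeSummable (glueCode rfl (headProj D ∘ₗ LinearMap.fst _ _ _) (sharedTriple ρ))
      (glueCode (add_comm 3 b) (sharedTriple ρ) (tailProj D ∘ₗ LinearMap.fst _ _ _)) := by
  have hconst : ∀ c l, ρ c = 0 → sharedTriple ρ (c, l) = fun _ => l := fun c l hc => by
    simp [sharedTriple, hc, evenAddOnesEquiv_zero_left]
  have hsurj : Function.Surjective (sharedTriple ρ) :=
    evenAddOnesEquiv.surjective.comp (hρ.prodMap Function.surjective_id)
  exact ⟨by omega, by omega,
    noLowWtTail_glueCode _ _ fun w hw => ⟨w.2, hconst w.1 w.2 (hp hw)⟩,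
    noLowWtTail_dualCode_glueCode _ _ hsurj,
    noLowWtHead_glueCode _ _ fun w hw => ⟨w.2, hconst w.1 w.2 (hq hw)⟩,
    noLowWtHead_dualCode_glueCode _ _ hsurj,
    omegaLast_mem_glueCode _ _ (0, 1) (by simp) (hconst 0 1 (map_zero ρ)),
    omegaFirst_mem_glueCode _ _ (0, 1) (by simp) (hconst 0 1 (map_zero ρ))⟩

theorem threeSum_glueCode_eq {ρ : D →ₗ[ZMod 2] (Fin 2 → ZMod 2)}
    (hρ : LinearMap.ker ρ ≤ LinearMap.ker (headProj D) ⊔ LinearMap.ker (tailProj D))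
    (ha : 7 ≤ a + 3) (hb : 7 ≤ b + 3) :
    threeSum (glueCode rfl (headProj D ∘ₗ LinearMap.fst _ _ _) (sharedTriple ρ))
      (glueCode (add_comm 3 b) (sharedTriple ρ) (tailProj D ∘ₗ LinearMap.fst _ _ _)) ha hb = D := by
  ext x
  rw [mem_threeSum_glueCode_iff]
  constructor
  · rintro ⟨⟨c, l⟩, ⟨c', l'⟩, hcc', rfl⟩
    have hρc : ρ c = ρ c' := congrArg Prod.fst (evenAddOnesEquiv.injective hcc')
    obtain ⟨d, hd, hd'⟩ := exists_eq_eq_of_sub_mem_ker_sup_ker (headProj D) (tailProj D)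
      (c := c) (c' := c') (hρ (LinearMap.mem_ker.mpr (by rw [map_sub, hρc, sub_self])))
    simp only [LinearMap.comp_apply, LinearMap.fst_apply]
    rw [← hd, ← hd', appendLinear_headProj_tailProj]
    exact d.2
  · exact fun hx => ⟨(⟨x, hx⟩, 0), (⟨x, hx⟩, 0), rfl, appendLinear_headProj_tailProj D ⟨x, hx⟩⟩

theorem exists_threeSummable_threeSum_eq (ha : 4 ≤ a) (hb : 4 ≤ b)
    (hD : codeDim (D.map (funLeft (ZMod 2) (ZMod 2) (Fin.castAdd b))) +
      codeDim (D.map (funLeft (ZMod 2) (ZMod 2) (Fin.natAdd a))) = codeDim D + 2) :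
    ∃ (C₁ : Code (a + 3)) (C₂ : Code (b + 3)),
      ThreeSummable C₁ C₂ ∧ threeSum C₁ C₂ (by omega) (by omega) = D := by
  obtain ⟨ρ, hρ, hker⟩ := exists_surjective_ker_eq_ker_sup_ker (headProj D) (tailProj D)
    (disjoint_ker_headProj_ker_tailProj D) (k := 2) (by
      rw [headProj, tailProj, LinearMap.range_comp, LinearMap.range_comp, Submodule.range_subtype]
      exact hD)
  exact ⟨_, _, threeSummable_glueCode ha hb hρ (hker ▸ le_sup_left) (hker ▸ le_sup_right),
    threeSum_glueCode_eq hker.le _ _⟩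

end SplitCode

/-- The coordinates of `J` followed by those of `Jᶜ`, each in increasing order. -/
def Finset.appendComplEquiv {n : ℕ} (J : Finset (Fin n)) : Fin (J.card + Jᶜ.card) ≃ Fin n :=
  finSumFinEquiv.symm.trans <|
    ((J.orderIsoOfFin rfl).toEquiv.sumCongr ((Jᶜ.orderIsoOfFin rfl).toEquiv.trans
      (Equiv.subtypeEquivRight fun _ => Finset.mem_compl))).trans (Equiv.sumCompl (· ∈ J))

theorem map_castAdd_map_appendComplEquiv {n : ℕ} (C : Code n) (J : Finset (Fin n)) :
    (C.map (funLeft (ZMod 2) (ZMod 2) J.appendComplEquiv)).map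
      (funLeft (ZMod 2) (ZMod 2) (Fin.castAdd Jᶜ.card)) = restrictCode C J := by
  rw [← Submodule.map_comp, ← LinearMap.funLeft_comp]
  exact congrArg (fun f => C.map (funLeft (ZMod 2) (ZMod 2) f))
    (funext fun j => by simp [Finset.appendComplEquiv])

theorem map_natAdd_map_appendComplEquiv {n : ℕ} (C : Code n) (J : Finset (Fin n)) :
    (C.map (funLeft (ZMod 2) (ZMod 2) J.appendComplEquiv)).map
      (funLeft (ZMod 2) (ZMod 2) (Fin.natAdd J.card)) = restrictCode C Jᶜ := by
  rw [← Submodule.map_comp, ← LinearMap.funLeft_comp]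
  exact congrArg (fun f => C.map (funLeft (ZMod 2) (ZMod 2) f))
    (funext fun j => by simp [Finset.appendComplEquiv])

theorem codeDim_map_funLeft {m n : ℕ} (C : Code n) (e : Fin m ≃ Fin n) :
    codeDim (C.map (funLeft (ZMod 2) (ZMod 2) e)) = codeDim C :=
  LinearEquiv.finrank_map_eq (LinearEquiv.funCongrLeft (ZMod 2) (ZMod 2) e) C

/-- a code with an exact, non-minimal 3-separation `(J, Jᶜ)` is
equivalent to a 3-sum of codes of lengths `|J| + 3` and `|Jᶜ| + 3`. -/
theorem exact_three_separation_gives_threeSum {n : ℕ} (C : Code n) (J : Finset (Fin n))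
    (hsep : IsExactKSep 3 C J) (hJ : 4 ≤ J.card) (hJc : 4 ≤ Jᶜ.card) :
    ∃ (C₁ : Code (J.card + 3)) (C₂ : Code (Jᶜ.card + 3)),
      ThreeSummable C₁ C₂ ∧
      CodeEquiv C (threeSum C₁ C₂ (by omega) (by omega)) := by
  obtain ⟨-, -, hdim⟩ := hsep
  obtain ⟨C₁, C₂, hsum, heq⟩ := exists_threeSummable_threeSum_eq
    (D := C.map (funLeft (ZMod 2) (ZMod 2) J.appendComplEquiv)) hJ hJc (by
      rw [map_castAdd_map_appendComplEquiv, map_natAdd_map_appendComplEquiv,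
        codeDim_map_funLeft]
      exact hdim)
  exact ⟨C₁, C₂, hsum, J.appendComplEquiv.symm, heq⟩
end
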